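/- arXiv:1403.2257 — 9 statements merged into one kernel-verified Lean document; each statement's English description precedes it below -/
import Mathlib

section
/- Let x, λ ∈ ℝ. Define 2×2 real matrices A₀ = [[x−λ, −1], [1, 0]], B₀ = [[x+λ, −1], [1, 0]], and recursively A_{n+1} = B_n · A_n and B_{n+1} = A_n · B_n for n ≥ 0. Set h_n = tr(A_n). Then h₁ = x² − λ² − 2, h₂ = (x² − λ²)² − 4x² + 2, and for every n ≥ 2, h_{n+1} = h_{n−1}²·(h_n − 2) + 2. -/
/-- Cayley–Hamilton for 2×2 matrices. -/
lemma ch2 (M : Matrix (Fin 2) (Fin 2) ℝ) :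
    M * M = M.trace • M - M.det • (1 : Matrix (Fin 2) (Fin 2) ℝ) := by
  ext i j
  fin_cases i <;> fin_cases j <;>
    simp [Matrix.mul_apply, Fin.sum_univ_two, Matrix.trace_fin_two,
      Matrix.det_fin_two, Matrix.one_apply] <;> ring

lemma key (a b : Matrix (Fin 2) (Fin 2) ℝ) (t : ℝ)
    (hta : a.trace = t) (htb : b.trace = t)
    (hda : a.det = 1) (hdb : b.det = 1) :
    (b * a * (a * b)).trace = t ^ 2 * (a * b).trace - 2 * t ^ 2 + 2 := by
  have h1 : b * a * (a * b) = b * (a * a * b) := by noncomm_ring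
  have h2 : (b * a * (a * b)).trace = (a * a * (b * b)).trace := by
    rw [h1, Matrix.trace_mul_comm, mul_assoc]
  rw [h2, ch2 a, ch2 b, hta, htb, hda, hdb]
  simp only [one_smul]
  have : (t • a - 1) * (t • b - 1) = (t * t) • (a * b) - t • a - t • b + 1 := by
    simp only [sub_mul, mul_sub, Matrix.smul_mul, Matrix.mul_smul, smul_smul,
      one_mul, mul_one]
    module
  rw [this]
  simp [Matrix.trace_add, Matrix.trace_sub, Matrix.trace_smul, hta, htb,
    Matrix.trace_one]
  ring

/-- Thue–Morse transfer matrices and the trace recurrence. -/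
theorem thueMorse_trace_recurrence (x lam : ℝ)
    (A B : ℕ → Matrix (Fin 2) (Fin 2) ℝ) (h : ℕ → ℝ)
    (hA0 : A 0 = !![x - lam, -1; 1, 0])
    (hB0 : B 0 = !![x + lam, -1; 1, 0])
    (hA : ∀ n, A (n + 1) = B n * A n)
    (hB : ∀ n, B (n + 1) = A n * B n)
    (hh : ∀ n, h n = (A n).trace) :
    h 1 = x ^ 2 - lam ^ 2 - 2 ∧
    h 2 = (x ^ 2 - lam ^ 2) ^ 2 - 4 * x ^ 2 + 2 ∧
    ∀ n : ℕ, 2 ≤ n → h (n + 1) = (h (n - 1)) ^ 2 * (h n - 2) + 2 := by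
  have hdet : ∀ n, (A n).det = 1 ∧ (B n).det = 1 := by
    intro n
    induction n with
    | zero =>
        refine ⟨?_, ?_⟩
        · rw [hA0, Matrix.det_fin_two_of]; ring
        · rw [hB0, Matrix.det_fin_two_of]; ring
    | succ n ih => exact ⟨by rw [hA, Matrix.det_mul, ih.1, ih.2, mul_one],
        by rw [hB, Matrix.det_mul, ih.1, ih.2, mul_one]⟩
  have htr : ∀ n, (A (n + 1)).trace = (B (n + 1)).trace := by
    intro n; rw [hA, hB, Matrix.trace_mul_comm]
  have hAB : ∀ n, (A n * B n).trace = (A (n + 1)).trace := by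
    intro n; rw [hA, Matrix.trace_mul_comm]
  have hkey : ∀ n, (A (n + 2) * B (n + 2)).trace =
      (A (n + 1)).trace ^ 2 * ((A (n + 1) * B (n + 1)).trace - 2) + 2 := by
    intro n
    rw [hA (n + 1), hB (n + 1)]
    rw [key (A (n + 1)) (B (n + 1)) ((A (n + 1)).trace) rfl (htr n).symm
      (hdet (n + 1)).1 (hdet (n + 1)).2]
    ring
  refine ⟨?_, ?_, ?_⟩
  · rw [hh, hA, hA0, hB0]
    simp [Matrix.trace_fin_two, Matrix.mul_apply, Fin.sum_univ_two]
    ring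
  · rw [hh, hA 1, hB 0, hA 0, hA0, hB0]
    simp [Matrix.trace_fin_two, Matrix.mul_apply, Fin.sum_univ_two]
    ring
  · intro n hn
    obtain ⟨m, rfl⟩ : ∃ m, n = m + 2 := ⟨n - 2, by omega⟩
    have e : m + 2 - 1 = m + 1 := rfl
    rw [hh, hh, hh, e, hA (m + 2), Matrix.trace_mul_comm, hkey m, hAB (m + 1)]
end

section
/- Define real polynomials (equivalently, functions ℝ → ℝ) by h₁(x) = x² − 2, h₂(x) = x⁴ − 4x² + 2, and h_{n+1} = h_{n−1}²·(h_n − 2) + 2 for n ≥ 2. Then for every n ≥ 1, h_n equals the n-fold composition p ∘ p ∘ ⋯ ∘ p (n times) of the map p(x) = x² − 2; equivalently h_{n+1} = h₁ ∘ h_n for all n ≥ 1. -/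
/-- at coupling 0 the Thue–Morse trace polynomials are the iterates
of `p x = x ^ 2 - 2`. -/
theorem thueMorse_traces_are_iterates (h : ℕ → ℝ → ℝ)
    (h1 : h 1 = fun x => x ^ 2 - 2)
    (h2 : h 2 = fun x => x ^ 4 - 4 * x ^ 2 + 2)
    (hrec : ∀ n : ℕ, 2 ≤ n → ∀ x : ℝ,
      h (n + 1) x = (h (n - 1) x) ^ 2 * (h n x - 2) + 2) :
    (∀ n : ℕ, 1 ≤ n → h n = (fun x : ℝ => x ^ 2 - 2)^[n]) ∧
    (∀ n : ℕ, 1 ≤ n → h (n + 1) = h 1 ∘ h n) := by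
  set p : ℝ → ℝ := fun x => x ^ 2 - 2 with hp
  have key : ∀ n : ℕ, h (n + 1) = p^[n + 1] ∧ h (n + 2) = p^[n + 2] := by
    intro n
    induction n with
    | zero =>
      constructor
      · rw [h1]; funext x; simp [Function.iterate_one]
      · rw [h2]; funext x
        simp only [Function.iterate_succ, Function.iterate_zero, Function.comp_apply, id_eq, hp]
        ring
    | succ k ih =>
      obtain ⟨ih1, ih2⟩ := ih
      refine ⟨ih2, ?_⟩
      funext x
      have := hrec (k + 2) (by omega) x
      simp only [show k + 2 - 1 = k + 1 from rfl] at this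
      rw [this, ih1, ih2]
      have e1 : p^[k + 2] x = (p^[k + 1] x) ^ 2 - 2 := by
        rw [Function.iterate_succ_apply']
      have e2 : p^[k + 3] x = (p^[k + 2] x) ^ 2 - 2 := by
        rw [show k + 3 = (k + 2) + 1 from rfl, Function.iterate_succ_apply']
      rw [e2, e1]; ring
  have main : ∀ n : ℕ, 1 ≤ n → h n = p^[n] := by
    intro n hn
    obtain ⟨m, rfl⟩ := Nat.exists_eq_add_of_le hn
    rw [Nat.add_comm]
    exact (key m).1
  refine ⟨main, fun n hn => ?_⟩
  funext x
  rw [main (n + 1) (by omega), main n hn, h1]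
  simp [Function.iterate_succ_apply', hp]
end

section
/- Let f_{−1}, f₀ be real polynomials and define f_{n+1} = f_{n−1}²·(f_n − 2) + 2 for all n ≥ 0. Let x₀ ∈ ℝ satisfy f₀(x₀) = 0, f₀′(x₀) ≠ 0, f₁(x₀) ≠ 0 and f₁(x₀) < 2, and set ρ = √(2 − f₁(x₀)) · |f₀′(x₀) · f₁(x₀)| > 0. Then f₂(x₀) = 2, f₂′(x₀) = 0, f₂″(x₀) = −2·(2 − f₁(x₀))·f₀′(x₀)²; and for every k ≥ 3: f_k(x₀) = 2, f_k′(x₀) = 0, and f_k″(x₀) = −2·4^{k−3}·ρ². In other words, for k ≥ 3, f_k(x) = 2 − (2^{k−3}ρ)²(x − x₀)² + O((x − x₀)³) near x₀. -/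
open Polynomial

lemma tm_evals (p q : Polynomial ℝ) (x : ℝ) :
    ((p ^ 2 * (q - 2) + 2).eval x = (p.eval x) ^ 2 * (q.eval x - 2) + 2) ∧
    ((derivative (p ^ 2 * (q - 2) + 2)).eval x =
      2 * p.eval x * (derivative p).eval x * (q.eval x - 2)
        + (p.eval x) ^ 2 * (derivative q).eval x) ∧
    ((derivative (derivative (p ^ 2 * (q - 2) + 2))).eval x =
      2 * ((derivative p).eval x) ^ 2 * (q.eval x - 2)
        + 2 * p.eval x * (derivative (derivative p)).eval x * (q.eval x - 2)
        + 4 * p.eval x * (derivative p).eval x * (derivative q).eval x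
        + (p.eval x) ^ 2 * (derivative (derivative q)).eval x) := by
  refine ⟨by simp, ?_, ?_⟩ <;>
  · simp [derivative_mul, derivative_pow, derivative_sub]
    try ring

/-- local behavior at a zero of `f 0` under the Thue–Morse iteration. -/
theorem thueMorse_local_germ (f : ℤ → Polynomial ℝ)
    (hrec : ∀ n : ℤ, 0 ≤ n → f (n + 1) = (f (n - 1)) ^ 2 * (f n - 2) + 2)
    (x₀ : ℝ)
    (h0 : (f 0).eval x₀ = 0)
    (h0' : (derivative (f 0)).eval x₀ ≠ 0)
    (h1ne : (f 1).eval x₀ ≠ 0)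
    (h1lt : (f 1).eval x₀ < 2)
    (ρ : ℝ)
    (hρ : ρ = Real.sqrt (2 - (f 1).eval x₀) *
      |(derivative (f 0)).eval x₀ * (f 1).eval x₀|) :
    0 < ρ ∧
    (f 2).eval x₀ = 2 ∧
    (derivative (f 2)).eval x₀ = 0 ∧
    (derivative (derivative (f 2))).eval x₀ =
      -2 * (2 - (f 1).eval x₀) * ((derivative (f 0)).eval x₀) ^ 2 ∧
    ∀ k : ℤ, 3 ≤ k →
      (f k).eval x₀ = 2 ∧
      (derivative (f k)).eval x₀ = 0 ∧
      (derivative (derivative (f k))).eval x₀ = -2 * (4 : ℝ) ^ (k - 3) * ρ ^ 2 := by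
  have hb2 : 0 < 2 - (f 1).eval x₀ := by linarith
  have hρpos : 0 < ρ := by
    rw [hρ]
    exact mul_pos (Real.sqrt_pos.mpr hb2) (abs_pos.mpr (mul_ne_zero h0' h1ne))
  have hρsq : ρ ^ 2 =
      (2 - (f 1).eval x₀) * ((derivative (f 0)).eval x₀ * (f 1).eval x₀) ^ 2 := by
    rw [hρ, mul_pow, sq_abs, Real.sq_sqrt hb2.le]
  have h2def : f 2 = (f 0) ^ 2 * (f 1 - 2) + 2 := by
    have h := hrec 1 (by norm_num); norm_num at h; exact h
  have E2 := tm_evals (f 0) (f 1) x₀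
  have hf2 : (f 2).eval x₀ = 2 := by rw [h2def, E2.1, h0]; ring
  have hf2' : (derivative (f 2)).eval x₀ = 0 := by rw [h2def, E2.2.1, h0]; ring
  have hf2'' : (derivative (derivative (f 2))).eval x₀ =
      -2 * (2 - (f 1).eval x₀) * ((derivative (f 0)).eval x₀) ^ 2 := by
    rw [h2def, E2.2.2, h0]; ring
  refine ⟨hρpos, hf2, hf2', hf2'', ?_⟩
  have h3def : f 3 = (f 1) ^ 2 * (f 2 - 2) + 2 := by
    have h := hrec 2 (by norm_num); norm_num at h; exact h
  have E3 := tm_evals (f 1) (f 2) x₀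
  have key : ∀ k : ℤ, 3 ≤ k →
      ((f k).eval x₀ = 2 ∧
      (derivative (f k)).eval x₀ = 0 ∧
      (derivative (derivative (f k))).eval x₀ = -2 * (4 : ℝ) ^ (k - 3) * ρ ^ 2) ∧
      (f (k - 1)).eval x₀ = 2 := by
    refine Int.le_induction ?_ ?_
    · refine ⟨⟨?_, ?_, ?_⟩, by norm_num [hf2]⟩
      · rw [h3def, E3.1, hf2]; ring
      · rw [h3def, E3.2.1, hf2, hf2']; ring
      · rw [h3def, E3.2.2, hf2, hf2', hf2'', hρsq]; norm_num; ring
    · rintro k hk ⟨⟨hv, hd, hdd⟩, hprev⟩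
      have hdef : f (k + 1) = (f (k - 1)) ^ 2 * (f k - 2) + 2 := hrec k (by linarith)
      have E := tm_evals (f (k - 1)) (f k) x₀
      have hpow : (4 : ℝ) ^ (k + 1 - 3) = (4 : ℝ) ^ (k - 3) * 4 := by
        rw [show k + 1 - 3 = (k - 3) + 1 by ring, zpow_add_one₀ (by norm_num : (4:ℝ) ≠ 0)]
      constructor
      · refine ⟨?_, ?_, ?_⟩
        · rw [hdef, E.1, hv, hprev]; ring
        · rw [hdef, E.2.1, hv, hd, hprev]; ring
        · rw [hdef, E.2.2, hv, hd, hdd, hprev, hpow]; ring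
      · have hk1 : k + 1 - 1 = k := by ring
        rw [hk1]; exact hv
  intro k hk
  exact (key k hk).1
end

section
/- Let α = 2^{−1/2}. For every integer m ≥ 0 there exist constants C̃_m, C_m > 0, depending only on m, with the following property: whenever a pair of real polynomials (P_{−1}, P₀) has a (1,1)-regular ρ-germ at some x₀ ∈ ℝ (for some ρ > 0), and P_k, Q_k, Δ_k are defined from this germ as below, then for every k ≥ 2m + 1 and every x ∈ [−2^{m−1}π, 2^{m−1}π], |Δ_k(x)| ≤ C̃_m · α^k · |x|³ ≤ C_m · α^k. -/
open Polynomial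

/-- The Thue–Morse iteration of a polynomial pair; `tmSeq Pm1 P0 (k+1)` is `P_k`,
so `tmSeq Pm1 P0 0 = P_{-1}` and `tmSeq Pm1 P0 1 = P₀`. -/
noncomputable def tmSeq (Pm1 P0 : Polynomial ℝ) : ℕ → Polynomial ℝ
  | 0 => Pm1
  | 1 => P0
  | (n + 2) => (tmSeq Pm1 P0 n) ^ 2 * (tmSeq Pm1 P0 (n + 1) - 2) + 2

/-- `tmDelta Pm1 P0 x₀ ρ (k+1) = Δ_k`, where
`Δ_k x = Q_k x - 2 cos x` and `Q_k x = P_k (x / (2 ^ k ρ) + x₀)`. -/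
noncomputable def tmDelta (Pm1 P0 : Polynomial ℝ) (x₀ ρ : ℝ) (j : ℕ) (x : ℝ) : ℝ :=
  (tmSeq Pm1 P0 j).eval (x / ((2 : ℝ) ^ ((j : ℤ) - 1) * ρ) + x₀) - 2 * Real.cos x

/-- `tmCoeff Pm1 P0 x₀ ρ (k+1) n = Δ_{k,n}`, the `n`-th Taylor coefficient of
`Δ_k` at `0`. -/
noncomputable def tmCoeff (Pm1 P0 : Polynomial ℝ) (x₀ ρ : ℝ) (j : ℕ) (n : ℕ) : ℝ :=
  iteratedDeriv n (tmDelta Pm1 P0 x₀ ρ j) 0 / (n.factorial : ℝ)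

/-- The pair `(Pm1, P0)` has a `ρ`-germ at `x₀`. -/
def HasGermAt (Pm1 P0 : Polynomial ℝ) (ρ x₀ : ℝ) : Prop :=
  0 < ρ ∧
  Pm1.eval x₀ = 2 ∧ (derivative Pm1).eval x₀ = 0 ∧
    (derivative (derivative Pm1)).eval x₀ = -ρ ^ 2 / 2 ∧
  P0.eval x₀ = 2 ∧ (derivative P0).eval x₀ = 0 ∧
    (derivative (derivative P0)).eval x₀ = -(2 * ρ ^ 2)

/-- The pair `(Pm1, P0)` has a `(δ, β)`-regular `ρ`-germ at `x₀`:
a `ρ`-germ together with the bounds `|Δ_{-1,n}| ≤ δ / β ^ n` and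
`|Δ_{0,n}| ≤ δ / β ^ n` for all `n ≥ 3`. -/
def IsRegularGermAt (Pm1 P0 : Polynomial ℝ) (δ β ρ x₀ : ℝ) : Prop :=
  HasGermAt Pm1 P0 ρ x₀ ∧
  ∀ n : ℕ, 3 ≤ n →
    |tmCoeff Pm1 P0 x₀ ρ 0 n| ≤ δ / β ^ n ∧ |tmCoeff Pm1 P0 x₀ ρ 1 n| ≤ δ / β ^ n

/-!
Write `Q_k = 2 cos + Δ_k`. Since `2 cos x = (2 cos (x/4))² (2 cos (x/2) - 2) + 2`, the recursion
`Q_{k+2}(x) = Q_k(x/4)² (Q_{k+1}(x/2) - 2) + 2` expresses `Δ_{k+2}(x)` through `Δ_{k+1}(x/2)` and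
`Δ_k(x/4)`, with dominant term `(2 cos (x/4))² Δ_{k+1}(x/2)`. Against a bound
`|Δ_k(y)| ≤ K α^k |y|³`, the cubic scaling `|x/2|³ = |x|³/8` makes this term contract by the factor
`1/√2 < 1`. On `|x| ≤ π/4` the other terms are small too, since there
`|2 cos (x/2) - 2| ≤ x²/4`, and the Taylor coefficients of `Δ_{-1}`, `Δ_0` (bounded by `1`,
vanishing below order `3`) give `|Δ_{-1}(x)|, |Δ_0(x)| ≤ |x|³ / (1 - |x|)`; so induction on `k`
gives the bound with `K` independent of `k`. Each doubling of the interval costs two steps of the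
recursion and a larger constant; `m + 1` doublings reach `|x| ≤ 2^{m-1} π` for `k ≥ 2m + 1`.
-/

open Real
open scoped Nat

theorem Polynomial.iteratedDeriv_eval (p : ℝ[X]) (n : ℕ) :
    iteratedDeriv n (fun x => p.eval x) = fun x => (derivative^[n] p).eval x := by
  induction n generalizing p with
  | zero => rfl
  | succ n ih =>
    have hd : _root_.deriv (fun x => p.eval x) = fun x => (derivative p).eval x := by
      funext x; exact p.deriv
    rw [iteratedDeriv_succ', hd, ih, Function.iterate_succ_apply]

theorem Polynomial.iteratedDeriv_eval_zero (p : ℝ[X]) (n : ℕ) :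
    iteratedDeriv n (fun x => p.eval x) 0 = n ! * p.coeff n := by
  simp [iteratedDeriv_eval, ← coeff_zero_eq_eval_zero, coeff_iterate_derivative,
    Nat.descFactorial_self, nsmul_eq_mul]

theorem Polynomial.hasSum_coeff_mul_pow (p : ℝ[X]) (x : ℝ) :
    HasSum (fun n => p.coeff n * x ^ n) (p.eval x) := by
  rw [eval_eq_sum_range]
  refine hasSum_sum_of_ne_finset_zero fun n hn => ?_
  rw [coeff_eq_zero_of_natDegree_lt (by simpa using hn), zero_mul]

theorem Real.hasSum_iteratedDeriv_cos_zero (x : ℝ) :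
    HasSum (fun n => iteratedDeriv n cos 0 / n ! * x ^ n) (cos x) := by
  have hodd : ∀ n ∉ Set.range (2 * ·), iteratedDeriv n cos 0 / n ! * x ^ n = 0 := by
    intro n hn
    obtain ⟨i, rfl⟩ : Odd n := by simpa using hn
    simp
  have hinj : Function.Injective (2 * ·) := fun a b h => by simpa using h
  refine (hinj.hasSum_iff hodd).1 ?_
  convert hasSum_cos x using 2 with i
  simp [pow_mul]
  ring

theorem iteratedDeriv_eval_sub_two_mul_cos_zero (q : ℝ[X]) (n : ℕ) :
    iteratedDeriv n (fun x => q.eval x - 2 * cos x) 0 =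
      n ! * q.coeff n - 2 * iteratedDeriv n cos 0 := by
  have hq : ContDiff ℝ n fun x => q.eval x := by
    simpa only [coe_aeval_eq_eval] using q.contDiff_aeval (𝕜 := ℝ) n
  rw [iteratedDeriv_fun_sub hq.contDiffAt (contDiff_const.mul contDiff_cos).contDiffAt,
    iteratedDeriv_const_mul_field, q.iteratedDeriv_eval_zero]

theorem hasSum_iteratedDeriv_eval_sub_two_mul_cos (q : ℝ[X]) (x : ℝ) :
    HasSum (fun n => iteratedDeriv n (fun x => q.eval x - 2 * cos x) 0 / n ! * x ^ n)
      (q.eval x - 2 * cos x) := by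
  have hterm : (fun n => iteratedDeriv n (fun x => q.eval x - 2 * cos x) 0 / n ! * x ^ n) =
      fun n => q.coeff n * x ^ n - 2 * (iteratedDeriv n cos 0 / n ! * x ^ n) := by
    funext n
    rw [iteratedDeriv_eval_sub_two_mul_cos_zero]
    field_simp
  rw [hterm]
  exact (q.hasSum_coeff_mul_pow x).sub ((hasSum_iteratedDeriv_cos_zero x).mul_left 2)

theorem abs_le_pow_div_of_hasSum {a : ℕ → ℝ} {x s : ℝ} {d : ℕ}
    (hs : HasSum (fun n => a n * x ^ n) s) (hx : |x| < 1) (ha : ∀ n, |a n| ≤ 1)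
    (hlow : ∀ n < d, a n = 0) : |s| ≤ |x| ^ d / (1 - |x|) := by
  have hshift : HasSum (fun i => a (i + d) * x ^ (i + d)) s := by
    have hhead : ∑ i ∈ Finset.range d, a i * x ^ i = 0 :=
      Finset.sum_eq_zero fun i hi => by rw [hlow i (Finset.mem_range.1 hi), zero_mul]
    simpa [hhead] using (hasSum_nat_add_iff' d).2 hs
  have hgeom : HasSum (fun i => |x| ^ d * |x| ^ i) (|x| ^ d / (1 - |x|)) := by
    simpa [div_eq_mul_inv] using (hasSum_geometric_of_lt_one (abs_nonneg x) hx).mul_left (|x| ^ d)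
  rw [← hshift.tsum_eq]
  refine tsum_of_norm_bounded (f := fun i => a (i + d) * x ^ (i + d)) hgeom fun i => ?_
  rw [Real.norm_eq_abs, abs_mul, abs_pow, pow_add, mul_comm (|x| ^ d)]
  exact mul_le_of_le_one_left (by positivity) (ha _)

theorem one_div_sqrt_two_sq : (1 / √2 : ℝ) ^ 2 = 1 / 2 := by
  rw [div_pow, sq_sqrt zero_le_two, one_pow]

theorem five_div_eight_le_one_div_sqrt_two : (5 / 8 : ℝ) ≤ 1 / √2 := by
  nlinarith [one_div_sqrt_two_sq, show (0 : ℝ) < 1 / √2 by positivity]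

theorem one_div_sqrt_two_le_three_div_four : 1 / √2 ≤ (3 / 4 : ℝ) := by
  nlinarith [one_div_sqrt_two_sq, show (0 : ℝ) < 1 / √2 by positivity]

/-- `tmQ Pm1 P0 x₀ ρ (k+1)` is the polynomial `Q_k`. -/
noncomputable def tmQ (Pm1 P0 : ℝ[X]) (x₀ ρ : ℝ) (j : ℕ) : ℝ[X] :=
  (taylor x₀ (tmSeq Pm1 P0 j)).comp (C ((2 : ℝ) ^ ((j : ℤ) - 1) * ρ)⁻¹ * X)

section TmDelta

variable (Pm1 P0 : ℝ[X]) (x₀ ρ : ℝ)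

theorem tmDelta_eq_eval_tmQ (j : ℕ) :
    tmDelta Pm1 P0 x₀ ρ j = fun x => (tmQ Pm1 P0 x₀ ρ j).eval x - 2 * cos x := by
  funext x
  simp [tmDelta, tmQ, taylor_eval, div_eq_inv_mul]

theorem iteratedDeriv_tmDelta_zero (j n : ℕ) :
    iteratedDeriv n (tmDelta Pm1 P0 x₀ ρ j) 0 =
      ((2 : ℝ) ^ ((j : ℤ) - 1) * ρ)⁻¹ ^ n * (derivative^[n] (tmSeq Pm1 P0 j)).eval x₀ -
        2 * iteratedDeriv n cos 0 := by
  have hfac : (n ! : ℝ) * (hasseDeriv n (tmSeq Pm1 P0 j)).eval x₀ =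
      (derivative^[n] (tmSeq Pm1 P0 j)).eval x₀ := by
    rw [← factorial_smul_hasseDeriv, LinearMap.smul_apply, eval_smul, nsmul_eq_mul]
  rw [tmDelta_eq_eval_tmQ, iteratedDeriv_eval_sub_two_mul_cos_zero, ← hfac, tmQ,
    comp_C_mul_X_coeff, taylor_coeff]
  ring

theorem hasSum_tmCoeff (j : ℕ) (x : ℝ) :
    HasSum (fun n => tmCoeff Pm1 P0 x₀ ρ j n * x ^ n) (tmDelta Pm1 P0 x₀ ρ j x) := by
  simpa only [tmCoeff, tmDelta_eq_eval_tmQ] using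
    hasSum_iteratedDeriv_eval_sub_two_mul_cos (tmQ Pm1 P0 x₀ ρ j) x

theorem tmDelta_add_two (j : ℕ) (x : ℝ) :
    tmDelta Pm1 P0 x₀ ρ (j + 2) x =
      (2 * cos (x / 4)) ^ 2 * tmDelta Pm1 P0 x₀ ρ (j + 1) (x / 2) +
        (2 * (2 * cos (x / 4)) * tmDelta Pm1 P0 x₀ ρ j (x / 4) +
            tmDelta Pm1 P0 x₀ ρ j (x / 4) ^ 2) *
          (2 * cos (x / 2) - 2 + tmDelta Pm1 P0 x₀ ρ (j + 1) (x / 2)) := by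
  have hquarter : x / 4 / (2 ^ ((j : ℤ) - 1) * ρ) =
      x / (2 ^ (((j + 2 : ℕ) : ℤ) - 1) * ρ) := by
    rw [show ((j + 2 : ℕ) : ℤ) - 1 = (j - 1) + 2 by push_cast; ring, zpow_add₀ two_ne_zero]
    ring
  have hhalf : x / 2 / (2 ^ (((j + 1 : ℕ) : ℤ) - 1) * ρ) =
      x / (2 ^ (((j + 2 : ℕ) : ℤ) - 1) * ρ) := by
    rw [show ((j + 2 : ℕ) : ℤ) - 1 = ((j + 1 : ℕ) - 1) + 1 by push_cast; ring,
      zpow_add_one₀ two_ne_zero]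
    ring
  have hcos : 2 * cos x = (2 * cos (x / 4)) ^ 2 * (2 * cos (x / 2) - 2) + 2 := by
    have h₂ : cos x = 2 * cos (x / 2) ^ 2 - 1 := by rw [← cos_two_mul]; ring_nf
    have h₄ : cos (x / 2) = 2 * cos (x / 4) ^ 2 - 1 := by rw [← cos_two_mul]; ring_nf
    rw [h₂, h₄]
    ring
  simp only [tmDelta, tmSeq, eval_add, eval_mul, eval_pow, eval_sub, eval_ofNat, hquarter, hhalf]
  rw [hcos]
  ring

def TmDeltaDecay (K R : ℝ) (j₀ : ℕ) : Prop :=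
  ∀ j, j₀ ≤ j → ∀ x, |x| ≤ R →
    |tmDelta Pm1 P0 x₀ ρ j x| ≤ K * (1 / √2) ^ j * |x| ^ 3

variable {Pm1 P0 x₀ ρ}

theorem tmCoeff_eq_zero_of_lt_three (h : HasGermAt Pm1 P0 ρ x₀) {j n : ℕ} (hj : j ≤ 1)
    (hn : n < 3) : tmCoeff Pm1 P0 x₀ ρ j n = 0 := by
  obtain ⟨hρ, h₀, h₁, h₂, h₀', h₁', h₂'⟩ := h
  rw [tmCoeff, iteratedDeriv_tmDelta_zero, div_eq_zero_iff]
  left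
  interval_cases j <;> interval_cases n <;> simp [tmSeq, *] <;> field_simp <;> ring

theorem abs_tmDelta_le_of_isRegularGermAt (h : IsRegularGermAt Pm1 P0 1 1 ρ x₀) {j : ℕ}
    (hj : j ≤ 1) {x : ℝ} (hx : |x| < 1) :
    |tmDelta Pm1 P0 x₀ ρ j x| ≤ |x| ^ 3 / (1 - |x|) := by
  refine abs_le_pow_div_of_hasSum (hasSum_tmCoeff Pm1 P0 x₀ ρ j x) hx (fun n => ?_)
    fun n hn => tmCoeff_eq_zero_of_lt_three h.1 hj hn
  rcases lt_or_ge n 3 with hn | hn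
  · simp [tmCoeff_eq_zero_of_lt_three h.1 hj hn]
  · interval_cases j
    · simpa using (h.2 n hn).1
    · simpa using (h.2 n hn).2

theorem abs_tmDelta_add_two_le {j : ℕ} {x d₁ d₂ β : ℝ}
    (h₁ : |tmDelta Pm1 P0 x₀ ρ (j + 1) (x / 2)| ≤ d₁)
    (h₂ : |tmDelta Pm1 P0 x₀ ρ j (x / 4)| ≤ d₂)
    (hβ : |2 * cos (x / 2) - 2| ≤ β) :
    |tmDelta Pm1 P0 x₀ ρ (j + 2) x| ≤ 4 * d₁ + (4 * d₂ + d₂ ^ 2) * (β + d₁) := by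
  set D₁ := tmDelta Pm1 P0 x₀ ρ (j + 1) (x / 2)
  set D₂ := tmDelta Pm1 P0 x₀ ρ j (x / 4)
  set c := 2 * cos (x / 4)
  have hc : |c| ≤ 2 := by simpa [c, abs_mul] using abs_cos_le_one (x / 4)
  have hd₁ : 0 ≤ d₁ := (abs_nonneg _).trans h₁
  have hd₂ : 0 ≤ d₂ := (abs_nonneg _).trans h₂
  have hfirst : |2 * c * D₂ + D₂ ^ 2| ≤ 4 * d₂ + d₂ ^ 2 := by
    refine (abs_add_le _ _).trans ?_
    rw [abs_mul, abs_mul, abs_two, abs_pow]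
    have := mul_le_mul hc h₂ (abs_nonneg _) zero_le_two
    nlinarith [pow_le_pow_left₀ (abs_nonneg D₂) h₂ 2]
  have hsecond : |2 * cos (x / 2) - 2 + D₁| ≤ β + d₁ :=
    (abs_add_le _ _).trans (add_le_add hβ h₁)
  rw [tmDelta_add_two]
  calc |c ^ 2 * D₁ + (2 * c * D₂ + D₂ ^ 2) * (2 * cos (x / 2) - 2 + D₁)|
      ≤ |c| ^ 2 * |D₁| + |2 * c * D₂ + D₂ ^ 2| * |2 * cos (x / 2) - 2 + D₁| := by
        rw [← abs_pow, ← abs_mul, ← abs_mul]; exact abs_add_le _ _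
    _ ≤ 2 ^ 2 * d₁ + (4 * d₂ + d₂ ^ 2) * (β + d₁) := by gcongr
    _ = 4 * d₁ + (4 * d₂ + d₂ ^ 2) * (β + d₁) := by norm_num

theorem tmDeltaDecay_quarter_pi (h : IsRegularGermAt Pm1 P0 1 1 ρ x₀) :
    TmDeltaDecay Pm1 P0 x₀ ρ 8 (π / 4) 0 := by
  have ht₀ : (0 : ℝ) < 1 / √2 := by positivity
  have ht₁ := five_div_eight_le_one_div_sqrt_two
  have ht₂ := one_div_sqrt_two_le_three_div_four
  set t : ℝ := 1 / √2
  suffices ∀ j x, |x| ≤ π / 4 → |tmDelta Pm1 P0 x₀ ρ j x| ≤ 8 * t ^ j * |x| ^ 3 from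
    fun j _ => this j
  intro j
  induction j using Nat.strong_induction_on with
  | _ j ih =>
  intro x hx
  have hr : |x| ≤ 63 / 80 := by linarith [pi_lt_d2]
  have hr₀ := abs_nonneg x
  rcases le_or_gt j 1 with hj | hj
  · have htj : 5 / 8 ≤ t ^ j := by interval_cases j <;> simp <;> linarith
    calc |tmDelta Pm1 P0 x₀ ρ j x| ≤ |x| ^ 3 / (1 - |x|) :=
          abs_tmDelta_le_of_isRegularGermAt h hj (by linarith)
      _ ≤ |x| ^ 3 * 5 := by
          rw [div_le_iff₀ (by linarith)]
          nlinarith [pow_nonneg hr₀ 3]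
      _ ≤ 8 * t ^ j * |x| ^ 3 := by nlinarith [pow_nonneg hr₀ 3]
  obtain ⟨i, rfl⟩ : ∃ i, j = i + 2 := ⟨j - 2, by omega⟩
  set E := t ^ i * |x| ^ 3
  have h₁ : |tmDelta Pm1 P0 x₀ ρ (i + 1) (x / 2)| ≤ t * E := by
    refine (ih (i + 1) (by omega) (x / 2) (by rw [abs_div, abs_two]; linarith)).trans_eq ?_
    rw [abs_div, abs_two]; ring
  have h₂ : |tmDelta Pm1 P0 x₀ ρ i (x / 4)| ≤ E / 8 := by
    refine (ih i (by omega) (x / 4) (by rw [abs_div]; norm_num; linarith)).trans_eq ?_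
    rw [abs_div, abs_of_pos (by norm_num : (0 : ℝ) < 4)]; ring
  have hβ : |2 * cos (x / 2) - 2| ≤ |x| ^ 2 / 4 := by
    have := one_sub_sq_div_two_le_cos (x := x / 2)
    rw [abs_le, sq_abs]
    constructor <;> nlinarith [cos_le_one (x / 2)]
  have hE₀ : 0 ≤ E := by positivity
  have hE : E ≤ 1 / 2 := by
    have : t ^ i ≤ 1 := pow_le_one₀ ht₀.le (by linarith)
    have : |x| ^ 3 ≤ 1 / 2 := by nlinarith [pow_le_pow_left₀ hr₀ hr 3]
    nlinarith [pow_nonneg hr₀ 3]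
  have hquad : E / 2 + (E / 8) ^ 2 ≤ E := by nlinarith
  have hsum : |x| ^ 2 / 4 + t * E ≤ 1 := by nlinarith [pow_le_pow_left₀ hr₀ hr 2]
  refine (abs_tmDelta_add_two_le h₁ h₂ hβ).trans ?_
  have hrhs : 8 * t ^ (i + 2) * |x| ^ 3 = 4 * E := by
    rw [pow_add, one_div_sqrt_two_sq]; ring
  rw [hrhs]
  nlinarith [mul_le_mul hquad hsum (by positivity) hE₀]

theorem TmDeltaDecay.double {K R : ℝ} {j₀ : ℕ} (hK : 0 ≤ K)
    (h : TmDeltaDecay Pm1 P0 x₀ ρ K R j₀) :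
    TmDeltaDecay Pm1 P0 x₀ ρ (K * (5 + K * (2 * R) ^ 3) ^ 2) (2 * R) (j₀ + 2) := by
  have ht₀ : (0 : ℝ) < 1 / √2 := by positivity
  have ht₁ := five_div_eight_le_one_div_sqrt_two
  have ht₂ := one_div_sqrt_two_le_three_div_four
  have ht_sq := one_div_sqrt_two_sq
  set t : ℝ := 1 / √2
  intro j hj x hx
  obtain ⟨i, rfl⟩ : ∃ i, j = i + 2 := ⟨j - 2, by omega⟩
  have hr₀ := abs_nonneg x
  set L := K * (2 * R) ^ 3
  set E := K * t ^ (i + 2) * |x| ^ 3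
  have hE₀ : 0 ≤ E := by positivity
  have hEL : E ≤ L := by
    have : t ^ (i + 2) ≤ 1 := pow_le_one₀ ht₀.le (by linarith)
    have : |x| ^ 3 ≤ (2 * R) ^ 3 := pow_le_pow_left₀ hr₀ hx 3
    calc K * t ^ (i + 2) * |x| ^ 3 ≤ K * 1 * (2 * R) ^ 3 := by gcongr
      _ = L := by ring
  have hL : 0 ≤ L := hE₀.trans hEL
  have h₁ : |tmDelta Pm1 P0 x₀ ρ (i + 1) (x / 2)| ≤ E / 4 := by
    refine (h (i + 1) (by omega) (x / 2) (by rw [abs_div, abs_two]; linarith)).trans ?_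
    have : t ^ (i + 1) ≤ 2 * t ^ (i + 2) := by
      rw [pow_succ t (i + 1)]; nlinarith [pow_pos ht₀ (i + 1)]
    rw [abs_div, abs_two]
    calc K * t ^ (i + 1) * (|x| / 2) ^ 3 ≤ K * (2 * t ^ (i + 2)) * (|x| / 2) ^ 3 := by gcongr
      _ = E / 4 := by ring
  have h₂ : |tmDelta Pm1 P0 x₀ ρ i (x / 4)| ≤ E / 32 := by
    refine (h i (by omega) (x / 4) (by rw [abs_div]; norm_num; linarith)).trans_eq ?_
    change K * t ^ i * |x / 4| ^ 3 = K * t ^ (i + 2) * |x| ^ 3 / 32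
    rw [abs_div, abs_of_pos (by norm_num : (0 : ℝ) < 4), pow_add, ht_sq]
    ring
  have hβ : |2 * cos (x / 2) - 2| ≤ 4 := by
    rw [abs_le]; constructor <;> nlinarith [neg_one_le_cos (x / 2), cos_le_one (x / 2)]
  refine (abs_tmDelta_add_two_le h₁ h₂ hβ).trans ?_
  have hquad : 4 * (E / 32) + (E / 32) ^ 2 ≤ E * (1 + L) := by nlinarith
  have hsum : 4 + E / 4 ≤ 4 + L := by linarith
  have hrhs : K * (5 + L) ^ 2 * t ^ (i + 2) * |x| ^ 3 = E * (5 + L) ^ 2 := by ring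
  rw [hrhs]
  nlinarith [mul_le_mul hquad hsum (by linarith) (mul_nonneg hE₀ (by linarith))]

end TmDelta

theorem tmDeltaDecay_two_pow_mul_quarter_pi (n : ℕ) :
    ∃ K, 0 < K ∧ ∀ (Pm1 P0 : ℝ[X]) (x₀ ρ : ℝ), IsRegularGermAt Pm1 P0 1 1 ρ x₀ →
      TmDeltaDecay Pm1 P0 x₀ ρ K (2 ^ n * (π / 4)) (2 * n) := by
  induction n with
  | zero => exact ⟨8, by norm_num, fun _ _ _ _ h => by simpa using tmDeltaDecay_quarter_pi h⟩
  | succ n ih =>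
    obtain ⟨K, hK, hdecay⟩ := ih
    refine ⟨K * (5 + K * (2 * (2 ^ n * (π / 4))) ^ 3) ^ 2, by positivity, fun _ _ _ _ h => ?_⟩
    rw [show 2 * (n + 1) = 2 * n + 2 by ring,
      show (2 : ℝ) ^ (n + 1) * (π / 4) = 2 * (2 ^ n * (π / 4)) by ring]
    exact (hdecay _ _ _ _ h).double hK.le

/-- exponential convergence of `Q_k` towards `2 cos x` for a
`(1,1)`-regular germ, with constants depending only on `m`
(here `α = 2 ^ (-1/2) = 1 / √2`). -/
theorem thueMorse_exp_convergence (m : ℕ) :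
    ∃ Ct Cm : ℝ, 0 < Ct ∧ 0 < Cm ∧
      ∀ (Pm1 P0 : Polynomial ℝ) (x₀ ρ : ℝ),
        IsRegularGermAt Pm1 P0 1 1 ρ x₀ →
        ∀ k : ℕ, 2 * m + 1 ≤ k →
          ∀ x ∈ Set.Icc (-((2 : ℝ) ^ ((m : ℤ) - 1) * Real.pi))
              ((2 : ℝ) ^ ((m : ℤ) - 1) * Real.pi),
            |tmDelta Pm1 P0 x₀ ρ (k + 1) x| ≤ Ct * (1 / Real.sqrt 2) ^ k * |x| ^ 3 ∧
            Ct * (1 / Real.sqrt 2) ^ k * |x| ^ 3 ≤ Cm * (1 / Real.sqrt 2) ^ k := by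
  obtain ⟨K, hK, hdecay⟩ := tmDeltaDecay_two_pow_mul_quarter_pi (m + 1)
  have hR : (2 : ℝ) ^ (m + 1) * (π / 4) = 2 ^ ((m : ℤ) - 1) * π := by
    rw [zpow_sub₀ two_ne_zero, zpow_natCast, zpow_one, pow_succ]
    ring
  set R := (2 : ℝ) ^ ((m : ℤ) - 1) * π
  refine ⟨K * (1 / √2), K * (1 / √2) * R ^ 3, by positivity, by positivity, ?_⟩
  intro Pm1 P0 x₀ ρ h k hk x hx
  have hxR : |x| ≤ R := abs_le.2 hx
  constructor
  · calc |tmDelta Pm1 P0 x₀ ρ (k + 1) x| ≤ K * (1 / √2) ^ (k + 1) * |x| ^ 3 :=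
          hdecay Pm1 P0 x₀ ρ h (k + 1) (by omega) x (hR ▸ hxR)
      _ = K * (1 / √2) * (1 / √2) ^ k * |x| ^ 3 := by ring
  · calc K * (1 / √2) * (1 / √2) ^ k * |x| ^ 3 ≤ K * (1 / √2) * (1 / √2) ^ k * R ^ 3 := by
          gcongr
      _ = K * (1 / √2) * R ^ 3 * (1 / √2) ^ k := by ring
end

section
/- Let (Δ_k)_{k ≥ −1} be real-analytic functions on ℝ whose Taylor expansions at 0 have the form Δ_k(x) = Σ_{n≥3} Δ_{k,n} xⁿ, and which satisfy, for all k ≥ 1, the recurrence Δ_k(x) = (2 + 2·cos(x/2))·Δ_{k−1}(x/2) + Δ_{k−2}(x/4)·(4·cos(x/4) + Δ_{k−2}(x/4))·(2·cos(x/2) − 2 + Δ_{k−1}(x/2)). Fix k ≥ 0 and suppose 0 < δ ≤ 1 is such that |Δ_{k−1,n}| ≤ δ and |Δ_{k,n}| ≤ δ for every n ≥ 3. Then |Δ_{k+1,3}| ≤ 4δ/2³, |Δ_{k+1,4}| ≤ 4δ/2⁴, and |Δ_{k+1,n}| ≤ 9δ/2ⁿ for every n ≥ 5. -/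
/-!
Write `A = D k`, `B = D (k + 1)` and take Taylor coefficients `c_n` at `0`. The recurrence becomes
`c_n(D (k + 2)) = 2⁻ⁿ (c_n(V B) + ∑ₘ c_m(A G) c_{n-m}(K) / 2ᵐ)` with `V = 2 + 2 cos`,
`G = 4 cos + A`, `K = 2 cos - 2 + B`. As `A`, `B` vanish to order `3` and `|c_n(cos)| ≤ 1 / n!`,
`|c_n(V B)| ≤ (4 + 2 ∑_{i ≥ 2} 1 / i!) δ ≤ 11 δ / 2`, `|c_m(A G)| ≤ 4 δ (m - 2)` and
`|c_j(K)| ≤ 4 / 3`; with `∑ₘ (m - 2) / 2ᵐ = 1 / 2` this gives `11 / 2 + 8 / 3 < 9`.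
For `n ≤ 4` the sum has no nonzero term (`c_m(A G) = 0` for `m ≤ 2`, `c_j(K) = 0` for `j ≤ 1`)
and `c_n(V B) = 4 c_n(B)`.
-/

open Finset Real
open scoped ContDiff Nat

variable {n : ℕ}

noncomputable def taylorCoeff (f : ℝ → ℝ) (n : ℕ) : ℝ := iteratedDeriv n f 0 / n !

section TaylorCoeff

variable {f g : ℝ → ℝ}

theorem taylorCoeff_zero : taylorCoeff f 0 = f 0 := by simp [taylorCoeff]

theorem taylorCoeff_fun_add (hf : ContDiffAt ℝ n f 0) (hg : ContDiffAt ℝ n g 0) :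
    taylorCoeff (fun x => f x + g x) n = taylorCoeff f n + taylorCoeff g n := by
  rw [taylorCoeff, iteratedDeriv_fun_add hf hg, add_div]; rfl

theorem taylorCoeff_const_add (hn : 0 < n) (c : ℝ) :
    taylorCoeff (fun x => c + f x) n = taylorCoeff f n := by
  rw [taylorCoeff, iteratedDeriv_const_add hn]; rfl

theorem taylorCoeff_sub_const (hn : 0 < n) (c : ℝ) :
    taylorCoeff (fun x => f x - c) n = taylorCoeff f n := by
  simpa only [sub_eq_neg_add] using taylorCoeff_const_add hn (-c)

theorem taylorCoeff_const_mul (c : ℝ) :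
    taylorCoeff (fun x => c * f x) n = c * taylorCoeff f n := by
  rw [taylorCoeff, iteratedDeriv_const_mul_field, mul_div_assoc]; rfl

theorem taylorCoeff_fun_mul (hf : ContDiffAt ℝ n f 0) (hg : ContDiffAt ℝ n g 0) :
    taylorCoeff (fun x => f x * g x) n =
      ∑ i ∈ range (n + 1), taylorCoeff f i * taylorCoeff g (n - i) := by
  rw [taylorCoeff, iteratedDeriv_fun_mul hf hg, sum_div]
  refine sum_congr rfl fun i hi => ?_
  have hi : i ≤ n := Nat.lt_succ_iff.1 (mem_range.1 hi)
  rw [taylorCoeff, taylorCoeff, ← Nat.choose_mul_factorial_mul_factorial hi]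
  have hc : (n.choose i : ℝ) ≠ 0 := Nat.cast_ne_zero.2 (Nat.choose_pos hi).ne'
  push_cast
  field_simp

theorem taylorCoeff_comp_div_const (hf : ContDiff ℝ n f) (c : ℝ) :
    taylorCoeff (fun x => f (x / c)) n = taylorCoeff f n / c ^ n := by
  simp_rw [div_eq_inv_mul]
  simp only [taylorCoeff, iteratedDeriv_comp_const_mul hf, mul_zero, inv_pow]
  ring

theorem abs_taylorCoeff_cos_le {m : ℕ} (h : m ≤ n) : |taylorCoeff cos n| ≤ 1 / m ! := by
  rw [taylorCoeff, abs_div, Nat.abs_cast]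
  calc |iteratedDeriv n cos 0| / n ! ≤ 1 / n ! := by
        gcongr; exact abs_iteratedDeriv_cos_le_one n 0
    _ ≤ 1 / m ! := by gcongr

theorem taylorCoeff_cos_one : taylorCoeff cos 1 = 0 := by simp [taylorCoeff]

theorem taylorCoeff_fun_mul_eq_zero (hf : ContDiffAt ℝ n f 0) (hg : ContDiffAt ℝ n g 0)
    (hf0 : ∀ i ≤ n, taylorCoeff f i = 0) : taylorCoeff (fun x => f x * g x) n = 0 := by
  rw [taylorCoeff_fun_mul hf hg]
  exact sum_eq_zero fun i hi => by rw [hf0 i (Nat.lt_succ_iff.1 (mem_range.1 hi)), zero_mul]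

theorem taylorCoeff_comp_half_add_mul {F₁ F₂ F₃ : ℝ → ℝ} (h₁ : ContDiff ℝ n F₁)
    (h₂ : ContDiff ℝ n F₂) (h₃ : ContDiff ℝ n F₃) :
    taylorCoeff (fun x => F₁ (x / 2) + F₂ (x / 4) * F₃ (x / 2)) n =
      (taylorCoeff F₁ n +
        ∑ m ∈ range (n + 1), taylorCoeff F₂ m * taylorCoeff F₃ (n - m) / 2 ^ m) / 2 ^ n := by
  rw [taylorCoeff_fun_add (by fun_prop) (by fun_prop),
    taylorCoeff_fun_mul (by fun_prop) (by fun_prop), taylorCoeff_comp_div_const h₁, add_div,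
    sum_div]
  congr 1
  refine sum_congr rfl fun m hm => ?_
  have hm : m ≤ n := Nat.lt_succ_iff.1 (mem_range.1 hm)
  rw [taylorCoeff_comp_div_const (h₂.of_le (by exact_mod_cast hm)),
    taylorCoeff_comp_div_const (h₃.of_le (by exact_mod_cast Nat.sub_le n m)),
    show (4 : ℝ) ^ m = 2 ^ m * 2 ^ m by rw [← mul_pow]; norm_num,
    ← Nat.add_sub_cancel' hm, pow_add, Nat.add_sub_cancel_left]
  field_simp

end TaylorCoeff

theorem abs_sum_mul_le_sum_mul {ι : Type*} {s : Finset ι} {a b A B : ι → ℝ}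
    (ha : ∀ i ∈ s, |a i| ≤ A i) (hb : ∀ i ∈ s, |b i| ≤ B i) :
    |∑ i ∈ s, a i * b i| ≤ ∑ i ∈ s, A i * B i :=
  (abs_sum_le_sum_abs _ _).trans <| sum_le_sum fun i hi => by
    rw [abs_mul]
    exact mul_le_mul (ha i hi) (hb i hi) (abs_nonneg _) ((abs_nonneg _).trans (ha i hi))

theorem sum_range_add_two_sub_two_div_two_pow (N : ℕ) :
    ∑ m ∈ range (N + 2), ((m - 2 : ℕ) : ℝ) / 2 ^ m = 1 / 2 - (N + 1) / 2 ^ (N + 1) := by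
  induction N with
  | zero => norm_num [sum_range_succ]
  | succ N ih =>
    rw [sum_range_succ, ih, Nat.add_sub_cancel]
    push_cast
    field_simp
    ring

theorem sum_range_sub_two_div_two_pow_le (N : ℕ) :
    ∑ m ∈ range N, ((m - 2 : ℕ) : ℝ) / 2 ^ m ≤ 1 / 2 := by
  calc ∑ m ∈ range N, ((m - 2 : ℕ) : ℝ) / 2 ^ m
      ≤ ∑ m ∈ range (N + 2), ((m - 2 : ℕ) : ℝ) / 2 ^ m :=
        sum_le_sum_of_subset_of_nonneg (range_subset_range.2 (by omega))
          fun _ _ _ => by positivity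
    _ ≤ 1 / 2 := by
        rw [sum_range_add_two_sub_two_div_two_pow]
        linarith [show (0 : ℝ) ≤ (N + 1) / 2 ^ (N + 1) by positivity]

section Convolution

variable {p h : ℕ → ℝ}

theorem abs_sum_mul_div_two_pow_le {C H : ℝ} (hp : ∀ m, |p m| ≤ C * (m - 2 : ℕ))
    (hh : ∀ j, |h j| ≤ H) (n : ℕ) :
    |∑ m ∈ range (n + 1), p m * h (n - m) / 2 ^ m| ≤ C * H / 2 := by
  have hC : 0 ≤ C := by simpa using (abs_nonneg _).trans (hp 3)
  have hH : 0 ≤ H := (abs_nonneg _).trans (hh 0)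
  calc |∑ m ∈ range (n + 1), p m * h (n - m) / 2 ^ m|
      = |∑ m ∈ range (n + 1), p m * (h (n - m) / 2 ^ m)| := by simp_rw [mul_div_assoc]
    _ ≤ ∑ m ∈ range (n + 1), C * (m - 2 : ℕ) * (H / 2 ^ m) :=
        abs_sum_mul_le_sum_mul (fun m _ => hp m) fun m _ => by
          rw [abs_div, abs_pow, abs_two]
          gcongr
          exact hh _
    _ = C * H * ∑ m ∈ range (n + 1), ((m - 2 : ℕ) : ℝ) / 2 ^ m := by
        rw [mul_sum]
        exact sum_congr rfl fun _ _ => by ring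
    _ ≤ C * H * (1 / 2) := by gcongr; exact sum_range_sub_two_div_two_pow_le _
    _ = C * H / 2 := by ring

theorem sum_mul_div_two_pow_eq_zero (hp : ∀ m ≤ 2, p m = 0) (hh : ∀ j ≤ 1, h j = 0)
    (hn : n ≤ 4) : ∑ m ∈ range (n + 1), p m * h (n - m) / 2 ^ m = 0 :=
  sum_eq_zero fun m _ => by
    rcases le_or_gt m 2 with hm | hm
    · rw [hp m hm, zero_mul, zero_div]
    · rw [hh (n - m) (by omega), mul_zero, zero_div]

end Convolution

theorem taylorCoeff_two_add_two_cos_of_pos (hn : 0 < n) :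
    taylorCoeff (fun x => 2 + 2 * cos x) n = 2 * taylorCoeff cos n := by
  rw [taylorCoeff_const_add hn, taylorCoeff_const_mul]

theorem sum_abs_taylorCoeff_two_add_two_cos_le (N : ℕ) :
    ∑ i ∈ range N, |taylorCoeff (fun x => 2 + 2 * cos x) i| ≤ 11 / 2 := by
  have hterm : ∀ i, |taylorCoeff (fun x => 2 + 2 * cos x) i|
      ≤ (if i = 0 then 4 else 0) + 2 * (if 2 ≤ i then 1 / (i ! : ℝ) else 0) := by
    rintro (_ | _ | i)
    · norm_num [taylorCoeff_zero]
    · simp [taylorCoeff_two_add_two_cos_of_pos, taylorCoeff_cos_one]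
    · rw [taylorCoeff_two_add_two_cos_of_pos (by omega), abs_mul, abs_two, if_neg (by omega),
        if_pos (by omega), zero_add]
      gcongr
      exact abs_taylorCoeff_cos_le le_rfl
  calc ∑ i ∈ range N, |taylorCoeff (fun x => 2 + 2 * cos x) i|
      ≤ ∑ i ∈ range N, ((if i = 0 then 4 else 0) + 2 * (if 2 ≤ i then 1 / (i ! : ℝ) else 0)) :=
        sum_le_sum fun i _ => hterm i
    _ = (if 0 ∈ range N then 4 else 0) + 2 * ∑ i ∈ range N with 2 ≤ i, (1 / i ! : ℝ) := by
        rw [sum_add_distrib, sum_ite_eq', ← mul_sum, sum_filter]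
    _ ≤ 4 + 2 * (3 / 4) := by
        gcongr
        · split_ifs <;> norm_num
        · exact (Complex.sum_div_factorial_le 2 N two_pos).trans (by norm_num)
    _ = 11 / 2 := by norm_num

noncomputable def thueMorseErrorStep (A B : ℝ → ℝ) (x : ℝ) : ℝ :=
  (2 + 2 * cos (x / 2)) * B (x / 2) +
    A (x / 4) * (4 * cos (x / 4) + A (x / 4)) * (2 * cos (x / 2) - 2 + B (x / 2))

section Step

variable {A B : ℝ → ℝ} {δ : ℝ}

theorem abs_taylorCoeff_two_add_two_cos_mul_le (hB : ContDiff ℝ ∞ B)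
    (hBδ : ∀ n, |taylorCoeff B n| ≤ δ) (n : ℕ) :
    |taylorCoeff (fun x => (2 + 2 * cos x) * B x) n| ≤ 11 / 2 * δ := by
  have hBn := contDiff_infty.1 hB n
  rw [taylorCoeff_fun_mul (by fun_prop) (by fun_prop)]
  calc |∑ i ∈ range (n + 1), taylorCoeff (fun x => 2 + 2 * cos x) i * taylorCoeff B (n - i)|
      ≤ ∑ i ∈ range (n + 1), |taylorCoeff (fun x => 2 + 2 * cos x) i| * δ :=
        abs_sum_mul_le_sum_mul (fun _ _ => le_rfl) fun _ _ => hBδ _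
    _ ≤ 11 / 2 * δ := by
        rw [← sum_mul]
        exact mul_le_mul_of_nonneg_right (sum_abs_taylorCoeff_two_add_two_cos_le _)
          ((abs_nonneg _).trans (hBδ 0))

theorem taylorCoeff_two_add_two_cos_mul_of_le_four (hB : ContDiff ℝ ∞ B)
    (hB0 : ∀ n ≤ 2, taylorCoeff B n = 0) (hn : n ≤ 4) :
    taylorCoeff (fun x => (2 + 2 * cos x) * B x) n = 4 * taylorCoeff B n := by
  have hBn := contDiff_infty.1 hB n
  rw [taylorCoeff_fun_mul (by fun_prop) (by fun_prop), sum_range_succ', sum_eq_zero,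
    zero_add, taylorCoeff_zero, Nat.sub_zero]
  · norm_num
  rintro (_ | i) hi
  · rw [zero_add, taylorCoeff_two_add_two_cos_of_pos one_pos, taylorCoeff_cos_one, mul_zero,
      zero_mul]
  · rw [hB0 _ (by simp at hi; omega), mul_zero]

theorem taylorCoeff_four_cos_add (hA : ContDiff ℝ ∞ A) (n : ℕ) :
    taylorCoeff (fun x => 4 * cos x + A x) n = 4 * taylorCoeff cos n + taylorCoeff A n := by
  have hAn := contDiff_infty.1 hA n
  rw [taylorCoeff_fun_add (by fun_prop) (by fun_prop), taylorCoeff_const_mul]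

theorem abs_taylorCoeff_four_cos_add_le (hA : ContDiff ℝ ∞ A)
    (hA0 : ∀ n ≤ 2, taylorCoeff A n = 0) (hA1 : ∀ n, |taylorCoeff A n| ≤ 1) (n : ℕ) :
    |taylorCoeff (fun x => 4 * cos x + A x) n| ≤ 4 := by
  rw [taylorCoeff_four_cos_add hA]
  rcases le_or_gt n 2 with hn | hn
  · rw [hA0 n hn, add_zero, abs_mul, abs_of_pos four_pos]
    simpa using abs_taylorCoeff_cos_le n.zero_le
  · have hcos : |taylorCoeff cos n| ≤ 1 / 3 ! := abs_taylorCoeff_cos_le hn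
    calc |4 * taylorCoeff cos n + taylorCoeff A n|
        ≤ 4 * |taylorCoeff cos n| + |taylorCoeff A n| := by
          simpa [abs_mul] using abs_add_le (4 * taylorCoeff cos n) (taylorCoeff A n)
      _ ≤ 4 * (1 / 3 !) + 1 := by gcongr; exact hA1 n
      _ ≤ 4 := by norm_num [Nat.factorial]

theorem abs_taylorCoeff_mul_four_cos_add_le (hA : ContDiff ℝ ∞ A)
    (hA0 : ∀ n ≤ 2, taylorCoeff A n = 0) (hAδ : ∀ n, |taylorCoeff A n| ≤ δ) (hδ1 : δ ≤ 1)
    (m : ℕ) : |taylorCoeff (fun x => A x * (4 * cos x + A x)) m| ≤ 4 * δ * (m - 2 : ℕ) := by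
  -- `m - 2` is truncated: it counts the indices `3 ≤ i ≤ m` where `c_i(A)` can be nonzero.
  have hAm := contDiff_infty.1 hA m
  have hcard : #{i ∈ range (m + 1) | 3 ≤ i} = m - 2 := by
    rw [show {i ∈ range (m + 1) | 3 ≤ i} = Ico 3 (m + 1) by ext; simp; omega, Nat.card_Ico]
    omega
  rw [taylorCoeff_fun_mul (by fun_prop) (by fun_prop)]
  calc |∑ i ∈ range (m + 1), taylorCoeff A i * taylorCoeff (fun x => 4 * cos x + A x) (m - i)|
      ≤ ∑ i ∈ range (m + 1), (if 3 ≤ i then δ else 0) * 4 :=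
        abs_sum_mul_le_sum_mul (fun i _ => by
            split_ifs with hi
            · exact hAδ i
            · rw [hA0 i (by omega), abs_zero])
          fun _ _ => abs_taylorCoeff_four_cos_add_le hA hA0 (fun n => (hAδ n).trans hδ1) _
    _ = 4 * δ * (m - 2 : ℕ) := by
        rw [← sum_mul, sum_ite, sum_const_zero, add_zero, sum_const, hcard, nsmul_eq_mul]
        ring

theorem taylorCoeff_two_cos_sub_two_add_of_pos (hB : ContDiff ℝ ∞ B) (hn : 0 < n) :
    taylorCoeff (fun x => 2 * cos x - 2 + B x) n = 2 * taylorCoeff cos n + taylorCoeff B n := by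
  have hBn := contDiff_infty.1 hB n
  rw [taylorCoeff_fun_add (by fun_prop) (by fun_prop), taylorCoeff_sub_const hn,
    taylorCoeff_const_mul]

theorem taylorCoeff_two_cos_sub_two_add_of_le_one (hB : ContDiff ℝ ∞ B)
    (hB0 : ∀ n ≤ 2, taylorCoeff B n = 0) (hn : n ≤ 1) :
    taylorCoeff (fun x => 2 * cos x - 2 + B x) n = 0 := by
  rcases Nat.le_one_iff_eq_zero_or_eq_one.1 hn with rfl | rfl
  · have hB00 := hB0 0 (by norm_num)
    rw [taylorCoeff_zero] at hB00 ⊢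
    simp [hB00]
  · rw [taylorCoeff_two_cos_sub_two_add_of_pos hB one_pos, taylorCoeff_cos_one, hB0 1 (by norm_num)]
    norm_num

theorem abs_taylorCoeff_two_cos_sub_two_add_le (hB : ContDiff ℝ ∞ B)
    (hB0 : ∀ n ≤ 2, taylorCoeff B n = 0) (hB1 : ∀ n, |taylorCoeff B n| ≤ 1) (n : ℕ) :
    |taylorCoeff (fun x => 2 * cos x - 2 + B x) n| ≤ 4 / 3 := by
  rcases le_or_gt n 1 with hn | hn
  · rw [taylorCoeff_two_cos_sub_two_add_of_le_one hB hB0 hn, abs_zero]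
    norm_num
  rw [taylorCoeff_two_cos_sub_two_add_of_pos hB (by omega)]
  rcases (show n = 2 ∨ 3 ≤ n by omega) with rfl | hn
  · have hcos : |taylorCoeff cos 2| ≤ 1 / 2 ! := abs_taylorCoeff_cos_le le_rfl
    rw [hB0 2 le_rfl, add_zero, abs_mul, abs_two]
    norm_num [Nat.factorial] at hcos
    linarith
  · have hcos : |taylorCoeff cos n| ≤ 1 / 3 ! := abs_taylorCoeff_cos_le hn
    calc |2 * taylorCoeff cos n + taylorCoeff B n|
        ≤ 2 * |taylorCoeff cos n| + |taylorCoeff B n| := by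
          simpa [abs_mul] using abs_add_le (2 * taylorCoeff cos n) (taylorCoeff B n)
      _ ≤ 2 * (1 / 3 !) + 1 := by gcongr; exact hB1 n
      _ = 4 / 3 := by norm_num [Nat.factorial]

theorem taylorCoeff_thueMorseErrorStep (hA : ContDiff ℝ ∞ A) (hB : ContDiff ℝ ∞ B) (n : ℕ) :
    taylorCoeff (thueMorseErrorStep A B) n =
      (taylorCoeff (fun x => (2 + 2 * cos x) * B x) n +
        ∑ m ∈ range (n + 1), taylorCoeff (fun x => A x * (4 * cos x + A x)) m *
          taylorCoeff (fun x => 2 * cos x - 2 + B x) (n - m) / 2 ^ m) / 2 ^ n := by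
  have hAn := contDiff_infty.1 hA n
  have hBn := contDiff_infty.1 hB n
  exact taylorCoeff_comp_half_add_mul (F₁ := fun x => (2 + 2 * cos x) * B x)
    (F₂ := fun x => A x * (4 * cos x + A x)) (F₃ := fun x => 2 * cos x - 2 + B x)
    (by fun_prop) (by fun_prop) (by fun_prop)

theorem taylorCoeff_thueMorseErrorStep_of_le_four (hA : ContDiff ℝ ∞ A) (hB : ContDiff ℝ ∞ B)
    (hA0 : ∀ n ≤ 2, taylorCoeff A n = 0) (hB0 : ∀ n ≤ 2, taylorCoeff B n = 0) (hn : n ≤ 4) :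
    taylorCoeff (thueMorseErrorStep A B) n = 4 * taylorCoeff B n / 2 ^ n := by
  have hP0 : ∀ m ≤ 2, taylorCoeff (fun x => A x * (4 * cos x + A x)) m = 0 := fun m hm => by
    have hAm := contDiff_infty.1 hA m
    exact taylorCoeff_fun_mul_eq_zero (by fun_prop) (by fun_prop) fun i hi => hA0 i (hi.trans hm)
  rw [taylorCoeff_thueMorseErrorStep hA hB, taylorCoeff_two_add_two_cos_mul_of_le_four hB hB0 hn,
    sum_mul_div_two_pow_eq_zero hP0
      (fun _ => taylorCoeff_two_cos_sub_two_add_of_le_one hB hB0) hn, add_zero]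

theorem abs_taylorCoeff_thueMorseErrorStep_le (hA : ContDiff ℝ ∞ A) (hB : ContDiff ℝ ∞ B)
    (hA0 : ∀ n ≤ 2, taylorCoeff A n = 0) (hB0 : ∀ n ≤ 2, taylorCoeff B n = 0)
    (hAδ : ∀ n, |taylorCoeff A n| ≤ δ) (hBδ : ∀ n, |taylorCoeff B n| ≤ δ) (hδ1 : δ ≤ 1)
    (n : ℕ) : |taylorCoeff (thueMorseErrorStep A B) n| ≤ 9 * δ / 2 ^ n := by
  have hδ : 0 ≤ δ := (abs_nonneg _).trans (hAδ 0)
  rw [taylorCoeff_thueMorseErrorStep hA hB, abs_div, abs_pow, abs_two]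
  gcongr
  calc _ ≤ _ := abs_add_le _ _
    _ ≤ 11 / 2 * δ + 4 * δ * (4 / 3) / 2 :=
        add_le_add (abs_taylorCoeff_two_add_two_cos_mul_le hB hBδ n)
          (abs_sum_mul_div_two_pow_le (abs_taylorCoeff_mul_four_cos_add_le hA hA0 hAδ hδ1)
            (abs_taylorCoeff_two_cos_sub_two_add_le hB hB0 fun n => (hBδ n).trans hδ1) n)
    _ ≤ 9 * δ := by linarith

end Step

theorem thueMorse_model_step_general (D : ℕ → ℝ → ℝ)
    (han : ∀ j : ℕ, ∀ x : ℝ, AnalyticAt ℝ (D j) x)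
    (hvanish : ∀ j : ℕ, ∀ n : ℕ, n ≤ 2 → iteratedDeriv n (D j) 0 = 0)
    (hrec : ∀ j : ℕ, 2 ≤ j → ∀ x : ℝ,
      D j x = (2 + 2 * Real.cos (x / 2)) * D (j - 1) (x / 2) +
        D (j - 2) (x / 4) * (4 * Real.cos (x / 4) + D (j - 2) (x / 4)) *
          (2 * Real.cos (x / 2) - 2 + D (j - 1) (x / 2)))
    (k : ℕ) (δ : ℝ) (hδ1 : δ ≤ 1)
    (hbdk : ∀ n : ℕ, 3 ≤ n →
      |iteratedDeriv n (D k) 0 / (n.factorial : ℝ)| ≤ δ)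
    (hbdk1 : ∀ n : ℕ, 3 ≤ n →
      |iteratedDeriv n (D (k + 1)) 0 / (n.factorial : ℝ)| ≤ δ) :
    |iteratedDeriv 3 (D (k + 2)) 0 / ((Nat.factorial 3 : ℕ) : ℝ)| ≤ 4 * δ / 2 ^ 3 ∧
    |iteratedDeriv 4 (D (k + 2)) 0 / ((Nat.factorial 4 : ℕ) : ℝ)| ≤ 4 * δ / 2 ^ 4 ∧
    ∀ n : ℕ, 5 ≤ n →
      |iteratedDeriv n (D (k + 2)) 0 / (n.factorial : ℝ)| ≤ 9 * δ / 2 ^ n := by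
  have hsmooth (j : ℕ) : ContDiff ℝ ∞ (D j) :=
    contDiff_iff_contDiffAt.2 fun x => (han j x).contDiffAt
  have hvan (j : ℕ) : ∀ n ≤ 2, taylorCoeff (D j) n = 0 := fun n hn => by
    rw [taylorCoeff, hvanish j n hn, zero_div]
  have hδ : 0 ≤ δ := (abs_nonneg _).trans (hbdk 3 le_rfl)
  have hbound (j : ℕ) (h : ∀ n, 3 ≤ n → |taylorCoeff (D j) n| ≤ δ) (n : ℕ) :
      |taylorCoeff (D j) n| ≤ δ := by
    rcases le_or_gt n 2 with hn | hn
    · rwa [hvan j n hn, abs_zero]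
    · exact h n hn
  have hstep : D (k + 2) = thueMorseErrorStep (D k) (D (k + 1)) := funext (hrec (k + 2) le_add_self)
  have hlow (n : ℕ) (h3 : 3 ≤ n) (h4 : n ≤ 4) : |taylorCoeff (D (k + 2)) n| ≤ 4 * δ / 2 ^ n := by
    rw [hstep, taylorCoeff_thueMorseErrorStep_of_le_four (hsmooth k) (hsmooth (k + 1)) (hvan k)
      (hvan (k + 1)) h4, abs_div, abs_mul, abs_pow, abs_two, abs_of_pos four_pos]
    gcongr
    exact hbdk1 n h3
  refine ⟨hlow 3 le_rfl (by norm_num), hlow 4 (by norm_num) le_rfl, fun n _ => ?_⟩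
  have := abs_taylorCoeff_thueMorseErrorStep_le (hsmooth k) (hsmooth (k + 1)) (hvan k)
    (hvan (k + 1)) (hbound k hbdk) (hbound (k + 1) hbdk1) hδ1 n
  rwa [← hstep] at this

/-- one step of coefficient control for the rescaled error
recurrence. Here `D j = Δ_{j-1}` (so `D 0 = Δ_{-1}`), and the `n`-th Taylor
coefficient at `0` of `D j` is `iteratedDeriv n (D j) 0 / n!`. -/
theorem thueMorse_model_step (D : ℕ → ℝ → ℝ)
    (han : ∀ j : ℕ, ∀ x : ℝ, AnalyticAt ℝ (D j) x)
    (hvanish : ∀ j : ℕ, ∀ n : ℕ, n ≤ 2 → iteratedDeriv n (D j) 0 = 0)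
    (hrec : ∀ j : ℕ, 2 ≤ j → ∀ x : ℝ,
      D j x = (2 + 2 * Real.cos (x / 2)) * D (j - 1) (x / 2) +
        D (j - 2) (x / 4) * (4 * Real.cos (x / 4) + D (j - 2) (x / 4)) *
          (2 * Real.cos (x / 2) - 2 + D (j - 1) (x / 2)))
    (k : ℕ) (δ : ℝ) (hδ0 : 0 < δ) (hδ1 : δ ≤ 1)
    (hbdk : ∀ n : ℕ, 3 ≤ n →
      |iteratedDeriv n (D k) 0 / (n.factorial : ℝ)| ≤ δ)
    (hbdk1 : ∀ n : ℕ, 3 ≤ n →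
      |iteratedDeriv n (D (k + 1)) 0 / (n.factorial : ℝ)| ≤ δ) :
    |iteratedDeriv 3 (D (k + 2)) 0 / ((Nat.factorial 3 : ℕ) : ℝ)| ≤ 4 * δ / 2 ^ 3 ∧
    |iteratedDeriv 4 (D (k + 2)) 0 / ((Nat.factorial 4 : ℕ) : ℝ)| ≤ 4 * δ / 2 ^ 4 ∧
    ∀ n : ℕ, 5 ≤ n →
      |iteratedDeriv n (D (k + 2)) 0 / (n.factorial : ℝ)| ≤ 9 * δ / 2 ^ n :=
  thueMorse_model_step_general D han hvanish hrec k δ hδ1 hbdk hbdk1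
end

section
/- Let 0 < δ < 0.01, k ∈ ℤ and m ∈ ℕ, and let φ : ℝ → ℝ be continuous (e.g. a polynomial) with |φ(x) − 2·cos(2^m x)| ≤ δ for all x ∈ [2^{1−m}kπ, 2^{1−m}kπ + 2^{−m}π]. Then every x₊ in that interval with φ(x₊) = 0 satisfies |x₊ − 2^{−m}(2kπ + π/2)| ≤ 2^{−m}δ. Symmetrically, if |φ(x) − 2·cos(2^m x)| ≤ δ for all x ∈ [2^{1−m}kπ − 2^{−m}π, 2^{1−m}kπ], then every zero x₋ of φ in that interval satisfies |x₋ − 2^{−m}(2kπ − π/2)| ≤ 2^{−m}δ. -/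
open Real

private lemma small_abs (δ : ℝ) (hδ0 : 0 < δ) (t : ℝ) (ht : |t| ≤ π / 2)
    (hs : |Real.sin t| ≤ δ / 2) : |t| ≤ δ := by
  have h2 : Real.sin |t| = |Real.sin t| := by
    rcases le_or_gt 0 t with h | h
    · rw [abs_of_nonneg h, abs_of_nonneg (Real.sin_nonneg_of_nonneg_of_le_pi h
        (by nlinarith [Real.pi_pos, abs_of_nonneg h]))]
    · rw [abs_of_neg h, Real.sin_neg, abs_of_nonpos (Real.sin_nonpos_of_nonpos_of_neg_pi_le
        h.le (by nlinarith [Real.pi_pos, abs_of_neg h]))]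
  have h1 : 2 / π * |t| ≤ Real.sin |t| :=
    Real.mul_le_sin (abs_nonneg t) ht
  have hπ4 : π ≤ 4 := by linarith [Real.pi_le_four]
  have hπ0 : 0 < π := Real.pi_pos
  have this1 : 2 / π * |t| ≤ δ / 2 := by linarith [h1, h2.ge, hs]
  have this2 : 2 * |t| / π ≤ δ / 2 := by
    rw [div_mul_eq_mul_div] at this1; linarith
  have h3 : 2 * |t| ≤ δ / 2 * π := (div_le_iff₀ hπ0).mp this2
  nlinarith [abs_nonneg t]

/-- rescaled zero localization for functions close to
`2 cos (2 ^ m x)`. -/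
theorem zero_localization_rescaled (δ : ℝ) (hδ0 : 0 < δ) (hδ1 : δ < 0.01)
    (k : ℤ) (m : ℕ) (φ : ℝ → ℝ) (hcont : Continuous φ) :
    ((∀ x ∈ Set.Icc ((2 : ℝ) ^ (1 - (m : ℤ)) * (k : ℝ) * Real.pi)
        ((2 : ℝ) ^ (1 - (m : ℤ)) * (k : ℝ) * Real.pi + (2 : ℝ) ^ (-(m : ℤ)) * Real.pi),
        |φ x - 2 * Real.cos ((2 : ℝ) ^ m * x)| ≤ δ) →
      ∀ xp ∈ Set.Icc ((2 : ℝ) ^ (1 - (m : ℤ)) * (k : ℝ) * Real.pi)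
        ((2 : ℝ) ^ (1 - (m : ℤ)) * (k : ℝ) * Real.pi + (2 : ℝ) ^ (-(m : ℤ)) * Real.pi),
        φ xp = 0 →
          |xp - (2 : ℝ) ^ (-(m : ℤ)) * (2 * (k : ℝ) * Real.pi + Real.pi / 2)| ≤
            (2 : ℝ) ^ (-(m : ℤ)) * δ) ∧
    ((∀ x ∈ Set.Icc ((2 : ℝ) ^ (1 - (m : ℤ)) * (k : ℝ) * Real.pi - (2 : ℝ) ^ (-(m : ℤ)) * Real.pi)
        ((2 : ℝ) ^ (1 - (m : ℤ)) * (k : ℝ) * Real.pi),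
        |φ x - 2 * Real.cos ((2 : ℝ) ^ m * x)| ≤ δ) →
      ∀ xm ∈ Set.Icc ((2 : ℝ) ^ (1 - (m : ℤ)) * (k : ℝ) * Real.pi - (2 : ℝ) ^ (-(m : ℤ)) * Real.pi)
        ((2 : ℝ) ^ (1 - (m : ℤ)) * (k : ℝ) * Real.pi),
        φ xm = 0 →
          |xm - (2 : ℝ) ^ (-(m : ℤ)) * (2 * (k : ℝ) * Real.pi - Real.pi / 2)| ≤
            (2 : ℝ) ^ (-(m : ℤ)) * δ) := by
  have hπ0 : 0 < π := Real.pi_pos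
  have hP0 : (0:ℝ) < (2:ℝ) ^ (-(m : ℤ)) := by positivity
  have hM0 : (0:ℝ) < (2:ℝ) ^ m := by positivity
  have key : (2:ℝ) ^ m * (2:ℝ) ^ (-(m : ℤ)) = 1 := by
    rw [← zpow_natCast (2:ℝ) m, ← zpow_add₀ (two_ne_zero)]
    simp
  have key2 : (2:ℝ) ^ m * (2:ℝ) ^ (1 - (m : ℤ)) = 2 := by
    rw [← zpow_natCast (2:ℝ) m, ← zpow_add₀ (two_ne_zero)]
    norm_num
  constructor
  · intro hφ xp hxp hzero
    set t : ℝ := (2:ℝ) ^ m * xp - (2 * (k : ℝ) * π + π / 2) with hT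
    have hlo : 2 * (k : ℝ) * π ≤ (2:ℝ) ^ m * xp := by
      have := mul_le_mul_of_nonneg_left hxp.1 hM0.le
      calc 2 * (k : ℝ) * π = (2:ℝ) ^ m * ((2:ℝ) ^ (1 - (m : ℤ)) * (k : ℝ) * π) := by
            rw [← mul_assoc, ← mul_assoc, key2]
        _ ≤ (2:ℝ) ^ m * xp := this
    have hhi : (2:ℝ) ^ m * xp ≤ 2 * (k : ℝ) * π + π := by
      have := mul_le_mul_of_nonneg_left hxp.2 hM0.le
      calc (2:ℝ) ^ m * xp ≤ (2:ℝ) ^ m * ((2:ℝ) ^ (1 - (m : ℤ)) * (k : ℝ) * π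
            + (2:ℝ) ^ (-(m : ℤ)) * π) := this
        _ = 2 * (k : ℝ) * π + π := by
            rw [mul_add, ← mul_assoc, ← mul_assoc, key2, ← mul_assoc, key, one_mul]
    have ht : |t| ≤ π / 2 := abs_le.mpr ⟨by simp only [hT]; linarith, by simp only [hT]; linarith⟩
    have hcoseq : Real.cos ((2:ℝ) ^ m * xp) = - Real.sin t := by
      have hx : (2:ℝ) ^ m * xp = (t + π / 2) + (k : ℝ) * (2 * π) := by rw [hT]; ring
      rw [hx, Real.cos_add_int_mul_two_pi, Real.cos_add_pi_div_two]
    have hcb : |Real.sin t| ≤ δ / 2 := by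
      have h := hφ xp hxp
      rw [hzero, hcoseq] at h
      rcases abs_le.mp h with ⟨h1, h2⟩
      exact abs_le.mpr ⟨by linarith, by linarith⟩
    have habs := small_abs δ hδ0 t ht hcb
    have hrw : xp - (2:ℝ) ^ (-(m : ℤ)) * (2 * (k : ℝ) * π + π / 2)
        = (2:ℝ) ^ (-(m : ℤ)) * t := by
      rw [hT]; linear_combination (-xp) * key
    rw [hrw, abs_mul, abs_of_pos hP0]
    exact mul_le_mul_of_nonneg_left habs hP0.le
  · intro hφ xm hxm hzero
    set t : ℝ := (2:ℝ) ^ m * xm - (2 * (k : ℝ) * π - π / 2) with hT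
    have hlo : 2 * (k : ℝ) * π - π ≤ (2:ℝ) ^ m * xm := by
      have := mul_le_mul_of_nonneg_left hxm.1 hM0.le
      calc 2 * (k : ℝ) * π - π = (2:ℝ) ^ m * ((2:ℝ) ^ (1 - (m : ℤ)) * (k : ℝ) * π
            - (2:ℝ) ^ (-(m : ℤ)) * π) := by
            rw [mul_sub, ← mul_assoc, ← mul_assoc, key2, ← mul_assoc, key, one_mul]
        _ ≤ (2:ℝ) ^ m * xm := this
    have hhi : (2:ℝ) ^ m * xm ≤ 2 * (k : ℝ) * π := by
      have := mul_le_mul_of_nonneg_left hxm.2 hM0.le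
      calc (2:ℝ) ^ m * xm ≤ (2:ℝ) ^ m * ((2:ℝ) ^ (1 - (m : ℤ)) * (k : ℝ) * π) := this
        _ = 2 * (k : ℝ) * π := by rw [← mul_assoc, ← mul_assoc, key2]
    have ht : |t| ≤ π / 2 := abs_le.mpr ⟨by simp only [hT]; linarith, by simp only [hT]; linarith⟩
    have hcoseq : Real.cos ((2:ℝ) ^ m * xm) = Real.sin t := by
      have hx : (2:ℝ) ^ m * xm = (t - π / 2) + (k : ℝ) * (2 * π) := by rw [hT]; ring
      rw [hx, Real.cos_add_int_mul_two_pi, Real.cos_sub_pi_div_two]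
    have hcb : |Real.sin t| ≤ δ / 2 := by
      have h := hφ xm hxm
      rw [hzero, hcoseq] at h
      rcases abs_le.mp h with ⟨h1, h2⟩
      exact abs_le.mpr ⟨by linarith, by linarith⟩
    have habs := small_abs δ hδ0 t ht hcb
    have hrw : xm - (2:ℝ) ^ (-(m : ℤ)) * (2 * (k : ℝ) * π - π / 2)
        = (2:ℝ) ^ (-(m : ℤ)) * t := by
      rw [hT]; linear_combination (-xm) * key
    rw [hrw, abs_mul, abs_of_pos hP0]
    exact mul_le_mul_of_nonneg_left habs hP0.le
end

section
/- Let 0 < δ < 0.01 and let φ, ψ : ℝ → ℝ be continuous (e.g. polynomials) with |φ(x) − 2·cos x| ≤ δ and |ψ(x) − 2·cos 8x| ≤ δ for all x ∈ [0, π]. Suppose x* ∈ [0, π] satisfies φ(x*) = 0 and φ(x) ≠ 0 for all x ∈ [0, x*) (x* is the minimal zero of φ in [0, π]), and suppose x_* ∈ (0, x*) satisfies ψ(x_*) = 0 and ψ(x) ≠ 0 for all x ∈ (x_*, x*) (x_* is the maximal zero of ψ in (0, x*)). Then |(x* − x_*) − π/16| ≤ 2δ. -/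
open Real

/-- Jordan-type inequality consequence: if `|sin v| ≤ ε` and `|v| ≤ π/2`
then `|v| ≤ (π/2) * ε`. -/
lemma abs_le_of_abs_sin_le {v ε : ℝ} (h1 : |v| ≤ π / 2) (h2 : |Real.sin v| ≤ ε) :
    |v| ≤ π / 2 * ε := by
  have hπ : (0:ℝ) < π := Real.pi_pos
  have habs : Real.sin |v| = |Real.sin v| := by
    rcases abs_cases v with ⟨h, _⟩ | ⟨h, _⟩
    · rw [h, abs_of_nonneg]
      exact Real.sin_nonneg_of_nonneg_of_le_pi (h ▸ abs_nonneg v) (by linarith)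
    · have hn : (0:ℝ) ≤ Real.sin (-v) := by
        apply Real.sin_nonneg_of_nonneg_of_le_pi
        · linarith [abs_nonneg v]
        · linarith
      rw [Real.sin_neg] at hn
      rw [h, Real.sin_neg, abs_of_nonpos (by linarith)]
  have := Real.mul_le_sin (abs_nonneg v) h1
  rw [habs] at this
  have h3 : 2 / π * |v| ≤ ε := this.trans h2
  calc |v| = π / 2 * (2 / π * |v|) := by field_simp
    _ ≤ π / 2 * ε := by
        apply mul_le_mul_of_nonneg_left h3 (by positivity)

set_option maxHeartbeats 1200000 in
/-- the gap between the first zero of a function `δ`-close to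
`2 cos x` on `[0, π]` and the last zero below it of a function `δ`-close to
`2 cos 8x` is within `2δ` of `π / 16`. -/
theorem zero_gap_estimate (δ : ℝ) (hδ0 : 0 < δ) (hδ1 : δ < 0.01)
    (φ ψ : ℝ → ℝ) (hφc : Continuous φ) (hψc : Continuous ψ)
    (hφ : ∀ x ∈ Set.Icc (0 : ℝ) Real.pi, |φ x - 2 * Real.cos x| ≤ δ)
    (hψ : ∀ x ∈ Set.Icc (0 : ℝ) Real.pi, |ψ x - 2 * Real.cos (8 * x)| ≤ δ)
    (xs : ℝ) (hxs : xs ∈ Set.Icc (0 : ℝ) Real.pi) (hφxs : φ xs = 0)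
    (hmin : ∀ x ∈ Set.Ico (0 : ℝ) xs, φ x ≠ 0)
    (xst : ℝ) (hxst : xst ∈ Set.Ioo (0 : ℝ) xs) (hψxst : ψ xst = 0)
    (hmax : ∀ x ∈ Set.Ioo xst xs, ψ x ≠ 0) :
    |(xs - xst) - Real.pi / 16| ≤ 2 * δ := by
  have hπ3 : (3.14159:ℝ) < π := by
    have := Real.pi_gt_d6; linarith
  have hπ4 : π < 3.1416 := by
    have := Real.pi_lt_d2; linarith [Real.pi_lt_d6]
  obtain ⟨hxs0, hxsπ⟩ := hxs
  obtain ⟨hxst0, hxstxs⟩ := hxst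
  -- Step 1: xs is close to π/2
  have hcxs : |Real.cos xs| ≤ δ / 2 := by
    have := hφ xs ⟨hxs0, hxsπ⟩
    rw [hφxs] at this
    rw [abs_sub_comm] at this
    simp only [sub_zero] at this
    rw [abs_mul] at this
    simp only [abs_two] at this
    linarith
  have hxsc : |π / 2 - xs| ≤ π / 2 * (δ / 2) := by
    apply abs_le_of_abs_sin_le
    · rw [abs_le]; constructor <;> linarith
    · rw [Real.sin_pi_div_two_sub]; exact hcxs
  have hxsc' : |π / 2 - xs| ≤ π * δ / 4 := by linarith [hxsc]
  have hxslo : π / 2 - π * δ / 4 ≤ xs := by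
    have := abs_le.mp hxsc'; linarith [this.2]
  have hxshi : xs ≤ π / 2 + π * δ / 4 := by
    have := abs_le.mp hxsc'; linarith [this.1]
  -- Step 2: IVT gives a zero of ψ in [3π/8, π/2 - 2δ], so xst ≥ 3π/8
  set a : ℝ := 3 * π / 8 with ha
  set b : ℝ := π / 2 - 2 * δ with hb
  have hab : a < b := by rw [ha, hb]; linarith
  have hbxs : b < xs := by rw [hb]; nlinarith [mul_lt_mul_of_pos_right hπ4 hδ0]
  have haI : a ∈ Set.Icc (0:ℝ) π := by
    constructor <;> [positivity; linarith]
  have hbI : b ∈ Set.Icc (0:ℝ) π := by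
    constructor <;> [linarith; linarith]
  have hψa : ψ a < 0 := by
    have h := hψ a haI
    have hc : Real.cos (8 * a) = -1 := by
      rw [ha]
      have : (8 : ℝ) * (3 * π / 8) = π + 2 * π := by ring
      rw [this, Real.cos_add_two_pi, Real.cos_pi]
    rw [hc] at h
    have := abs_le.mp h
    linarith [this.2]
  have hψb : 0 < ψ b := by
    have h := hψ b hbI
    have hc : Real.cos (8 * b) = Real.cos (16 * δ) := by
      rw [hb]
      have e : (8 : ℝ) * (π / 2 - 2 * δ) = -(16 * δ) + 2 * π + 2 * π := by ring
      rw [e, Real.cos_add_two_pi, Real.cos_add_two_pi, Real.cos_neg]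
    have hlb : 1 - (16 * δ) ^ 2 / 2 ≤ Real.cos (16 * δ) :=
      Real.one_sub_sq_div_two_le_cos
    rw [hc] at h
    have := abs_le.mp h
    nlinarith [this.1, mul_lt_mul_of_pos_left hδ1 hδ0]
  have hzero : ∃ z ∈ Set.Icc a b, ψ z = 0 := by
    have h0 : (0:ℝ) ∈ Set.Icc (ψ a) (ψ b) := ⟨hψa.le, hψb.le⟩
    have := intermediate_value_Icc hab.le hψc.continuousOn h0
    obtain ⟨z, hz, hz0⟩ := this
    exact ⟨z, hz, hz0⟩
  obtain ⟨z, ⟨hza, hzb⟩, hz0⟩ := hzero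
  have hzxst : z ≤ xst := by
    by_contra h
    push_neg at h
    exact hmax z ⟨h, lt_of_le_of_lt hzb hbxs⟩ hz0
  have hxsta : a ≤ xst := le_trans hza hzxst
  -- Step 3: bound on cos(8 xst)
  have hxstI : xst ∈ Set.Icc (0:ℝ) π := ⟨hxst0.le, by linarith⟩
  have hcxst : |Real.cos (8 * xst)| ≤ δ / 2 := by
    have := hψ xst hxstI
    rw [hψxst] at this
    rw [abs_sub_comm] at this
    simp only [sub_zero] at this
    rw [abs_mul] at this
    simp only [abs_two] at this
    linarith
  -- Step 4: xst ≤ π/2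
  have hxstle : xst ≤ π / 2 := by
    by_contra h
    push_neg at h
    set t : ℝ := 8 * xst - 4 * π with ht
    have hceq : Real.cos (8 * xst) = Real.cos t := by
      have e : (8:ℝ) * xst = t + 2 * π + 2 * π := by rw [ht]; ring
      rw [e, Real.cos_add_two_pi, Real.cos_add_two_pi]
    have ht0 : 0 < t := by rw [ht]; linarith
    have ht1 : t ≤ 2 * π * δ := by rw [ht]; linarith
    have hlb : 1 - t ^ 2 / 2 ≤ Real.cos t := Real.one_sub_sq_div_two_le_cos
    rw [hceq] at hcxst
    have h2 := (abs_le.mp hcxst).2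
    have hp : t ≤ 0.07 := by nlinarith [ht1, mul_lt_mul_of_pos_left hδ1 Real.pi_pos, hπ4]
    have ht2 : t ^ 2 ≤ 0.0049 := by nlinarith [hp, ht0]
    linarith
  -- Step 5: xst close to 7π/16
  have hxstc : |7 * π / 16 - xst| ≤ π * δ / 32 := by
    set u : ℝ := 8 * xst - 7 * π / 2 with hu
    have hsin : Real.sin u = Real.cos (8 * xst) := by
      have e : Real.cos (8 * xst) = Real.cos (π / 2 - u) := by
        have e2 : (8:ℝ) * xst = -(π / 2 - u) + 2 * π + 2 * π := by rw [hu]; ring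
        rw [e2, Real.cos_add_two_pi, Real.cos_add_two_pi, Real.cos_neg]
      rw [e, Real.cos_pi_div_two_sub]
    have hu1 : |u| ≤ π / 2 := by
      rw [abs_le, hu]
      constructor
      · rw [ha] at hxsta; linarith
      · linarith
    have hu2 : |u| ≤ π / 2 * (δ / 2) := by
      apply abs_le_of_abs_sin_le hu1
      rw [hsin]; exact hcxst
    have : |8 * xst - 7 * π / 2| ≤ π / 2 * (δ / 2) := hu2
    rw [abs_le] at this ⊢
    constructor <;> [linarith [this.2]; linarith [this.1]]
  -- Conclusion
  have key : |(xs - xst) - π / 16| ≤ |π / 2 - xs| + |7 * π / 16 - xst| := by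
    have e : (xs - xst) - π / 16 = -(π / 2 - xs) + (7 * π / 16 - xst) := by ring
    rw [e]
    calc |(-(π / 2 - xs)) + (7 * π / 16 - xst)|
        ≤ |(-(π / 2 - xs))| + |7 * π / 16 - xst| := abs_add_le _ _
      _ = |π / 2 - xs| + |7 * π / 16 - xst| := by rw [abs_neg]
  nlinarith [key, hxsc', hxstc, mul_lt_mul_of_pos_right hπ4 hδ0]
end

section
/- Fix an integer N ≥ 2 and δ > 0 with 30^{N}·δ ≤ 1. Let φ₀, φ₁ be real polynomials such that |φ₀(x) − 2·cos 8x| ≤ δ for all x ∈ [−π, π] and |φ₁(x) − 2·cos 16x| ≤ δ for all x ∈ [−π/2, π/2]. Define φ_n = φ_{n−2}²·(φ_{n−1} − 2) + 2 for n ≥ 2. Then for every n with 2 ≤ n ≤ N and every x ∈ [−π/2ⁿ, π/2ⁿ], |φ_n(x) − 2·cos(2^{n+3}x)| ≤ 30^{n−1}·δ. -/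
open Polynomial

lemma cos_iter_aux (θ : ℝ) :
    2 * Real.cos (4 * θ) = (2 * Real.cos θ) ^ 2 * (2 * Real.cos (2 * θ) - 2) + 2 := by
  have h4 : (4 : ℝ) * θ = 2 * (2 * θ) := by ring
  rw [h4, Real.cos_two_mul, Real.cos_two_mul θ]
  ring

/-- propagation of the uniform bound under the Thue–Morse
iteration, with factor `30` per step on intervals shrinking by factor `2`. -/
theorem thueMorse_uniform_propagation (N : ℕ) (hN : 2 ≤ N)
    (δ : ℝ) (hδ0 : 0 < δ) (hδ : (30 : ℝ) ^ N * δ ≤ 1)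
    (φ : ℕ → Polynomial ℝ)
    (h0 : ∀ x ∈ Set.Icc (-Real.pi) Real.pi,
      |(φ 0).eval x - 2 * Real.cos (8 * x)| ≤ δ)
    (h1 : ∀ x ∈ Set.Icc (-(Real.pi / 2)) (Real.pi / 2),
      |(φ 1).eval x - 2 * Real.cos (16 * x)| ≤ δ)
    (hrec : ∀ n : ℕ, φ (n + 2) = (φ n) ^ 2 * (φ (n + 1) - 2) + 2) :
    ∀ n : ℕ, 2 ≤ n → n ≤ N →
      ∀ x ∈ Set.Icc (-(Real.pi / 2 ^ n)) (Real.pi / 2 ^ n),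
        |(φ n).eval x - 2 * Real.cos ((2 : ℝ) ^ (n + 3) * x)| ≤ (30 : ℝ) ^ (n - 1) * δ := by
  have key : ∀ n : ℕ, n ≤ N →
      ∀ x ∈ Set.Icc (-(Real.pi / 2 ^ n)) (Real.pi / 2 ^ n),
        |(φ n).eval x - 2 * Real.cos ((2 : ℝ) ^ (n + 3) * x)| ≤ (30 : ℝ) ^ (n - 1) * δ := by
    intro n
    induction n using Nat.strong_induction_on with
    | _ n ih =>
      match n with
      | 0 =>
        intro _ x hx
        norm_num at hx ⊢
        simpa using h0 x hx
      | 1 =>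
        intro _ x hx
        norm_num at hx ⊢
        simpa using h1 x hx
      | (k + 2) =>
        intro hkN x hx
        have hpi := Real.pi_pos
        -- bound on earlier errors being ≤ 1
        have h30k : (30 : ℝ) ^ k * δ ≤ 1 := by
          refine le_trans ?_ hδ
          have : (30 : ℝ) ^ k ≤ 30 ^ N := by
            apply pow_le_pow_right₀ (by norm_num) (by omega)
          nlinarith
        have hεk : (30 : ℝ) ^ (k - 1) * δ ≤ 30 ^ k * δ := by
          have : (30 : ℝ) ^ (k - 1) ≤ 30 ^ k := by
            apply pow_le_pow_right₀ (by norm_num) (by omega)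
          nlinarith
        -- interval inclusions
        have hsub0 : Real.pi / 2 ^ (k + 2) ≤ Real.pi / 2 ^ k := by
          apply div_le_div_of_nonneg_left hpi.le (by positivity)
          exact pow_le_pow_right₀ one_le_two (by omega)
        have hsub1 : Real.pi / 2 ^ (k + 2) ≤ Real.pi / 2 ^ (k + 1) := by
          apply div_le_div_of_nonneg_left hpi.le (by positivity)
          exact pow_le_pow_right₀ one_le_two (by omega)
        have hxk : x ∈ Set.Icc (-(Real.pi / 2 ^ k)) (Real.pi / 2 ^ k) :=
          ⟨le_trans (neg_le_neg hsub0) hx.1, hx.2.trans hsub0⟩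
        have hxk1 : x ∈ Set.Icc (-(Real.pi / 2 ^ (k + 1))) (Real.pi / 2 ^ (k + 1)) :=
          ⟨le_trans (neg_le_neg hsub1) hx.1, hx.2.trans hsub1⟩
        have Ha := ih k (by omega) (by omega) x hxk
        have Hb := ih (k + 1) (by omega) (by omega) x hxk1
        set θ : ℝ := (2 : ℝ) ^ (k + 3) * x with hθ
        have e1 : (2 : ℝ) ^ (k + 1 + 3) * x = 2 * θ := by
          have : k + 1 + 3 = (k + 3) + 1 := by omega
          rw [hθ, this, pow_succ]; ring
        have e2 : (2 : ℝ) ^ (k + 2 + 3) * x = 4 * θ := by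
          have : k + 2 + 3 = (k + 3) + 2 := by omega
          rw [hθ, this, pow_add]; ring
        rw [e2]
        rw [e1] at Hb
        have hsub : (k + 1) - 1 = k := by omega
        rw [hsub] at Hb
        set a : ℝ := (φ k).eval x
        set b : ℝ := (φ (k + 1)).eval x
        set A : ℝ := 2 * Real.cos θ
        set B : ℝ := 2 * Real.cos (2 * θ)
        have hA : |A| ≤ 2 := by
          rw [abs_mul]
          have := Real.abs_cos_le_one θ
          norm_num; linarith [abs_nonneg (Real.cos θ), this]
        have hB : |B| ≤ 2 := by
          rw [abs_mul]
          have := Real.abs_cos_le_one (2 * θ)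
          norm_num; linarith
        have haA : |a - A| ≤ 30 ^ k * δ := le_trans Ha hεk
        have hbB : |b - B| ≤ 30 ^ k * δ := Hb
        have ha : |a| ≤ 3 := by
          have h := abs_add_le (a - A) A
          simp only [sub_add_cancel] at h
          linarith
        have heval : (φ (k + 2)).eval x = a ^ 2 * (b - 2) + 2 := by
          rw [hrec k]; simp [a, b]
        have hcos : 2 * Real.cos (4 * θ) = A ^ 2 * (B - 2) + 2 := cos_iter_aux θ
        rw [heval, hcos]
        have hid : a ^ 2 * (b - 2) + 2 - (A ^ 2 * (B - 2) + 2)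
            = a ^ 2 * (b - B) + (a - A) * ((a + A) * (B - 2)) := by ring
        rw [hid]
        have hE : (0:ℝ) ≤ 30 ^ k * δ := by positivity
        have h1' : |a ^ 2 * (b - B)| ≤ 9 * (30 ^ k * δ) := by
          rw [abs_mul, abs_pow]
          have h9 : |a| ^ 2 ≤ 9 := by nlinarith [abs_nonneg a]
          exact mul_le_mul h9 hbB (abs_nonneg _) (by norm_num)
        have h2' : |(a - A) * ((a + A) * (B - 2))| ≤ 20 * (30 ^ k * δ) := by
          rw [abs_mul]
          have haA' : |a + A| ≤ 5 := by
            have := abs_add_le a A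
            linarith
          have hB2 : |B - 2| ≤ 4 := by
            have h := abs_sub_abs_le_abs_sub B (2:ℝ)
            have h2 := abs_sub B (2:ℝ)
            rw [abs_two] at h2
            linarith
          have h20 : |(a + A) * (B - 2)| ≤ 20 := by
            rw [abs_mul]
            have := mul_le_mul haA' hB2 (abs_nonneg _) (by norm_num : (0:ℝ) ≤ 5)
            linarith
          have := mul_le_mul haA h20 (abs_nonneg _) hE
          linarith
        have hsum := abs_add_le (a ^ 2 * (b - B)) ((a - A) * ((a + A) * (B - 2)))
        have hfin : (k + 2) - 1 = k + 1 := by omega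
        rw [hfin]
        have hre : (30:ℝ) ^ (k + 1) * δ = 30 * (30 ^ k * δ) := by rw [pow_succ]; ring
        rw [hre]
        linarith
  intro n _ hnN x hx
  exact key n hnN x hx
end

section
/- Fix λ ∈ ℝ and define h₁(x) = x² − λ² − 2, h₂(x) = (x² − λ²)² − 4x² + 2, and h_{n+1} = h_{n−1}²·(h_n − 2) + 2 for n ≥ 2. Let a_∅ = √(2 + λ²) and ρ = (1 + 2λ²)·√((1 + λ²)(2 + λ²)). Then for every k ≥ 4: h_k(a_∅) = 2, h_k′(a_∅) = 0, and h_k″(a_∅) = −2·4^{k−1}·ρ²; in other words h_k(x) = 2 − 4^{k−1}ρ²·(x − a_∅)² + O((x − a_∅)³) near a_∅. -/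
open Polynomial

/-- values and first two derivatives of the Thue–Morse trace
polynomials `h_k`, `k ≥ 4`, at `a_∅ = √(2 + λ²)`:
`h_k(x) = 2 - 4 ^ (k-1) ρ² (x - a_∅)² + O((x - a_∅)³)` with
`ρ = (1 + 2λ²) √((1 + λ²)(2 + λ²))`. -/
theorem trace_poly_germ_at_sqrt (lam : ℝ) (h : ℕ → Polynomial ℝ)
    (h1 : h 1 = X ^ 2 - C (lam ^ 2) - 2)
    (h2 : h 2 = (X ^ 2 - C (lam ^ 2)) ^ 2 - 4 * X ^ 2 + 2)
    (hrec : ∀ n : ℕ, 2 ≤ n → h (n + 1) = (h (n - 1)) ^ 2 * (h n - 2) + 2) :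
    ∀ k : ℕ, 4 ≤ k →
      (h k).eval (Real.sqrt (2 + lam ^ 2)) = 2 ∧
      (derivative (h k)).eval (Real.sqrt (2 + lam ^ 2)) = 0 ∧
      (derivative (derivative (h k))).eval (Real.sqrt (2 + lam ^ 2)) =
        -2 * 4 ^ (k - 1) *
          ((1 + 2 * lam ^ 2) * Real.sqrt ((1 + lam ^ 2) * (2 + lam ^ 2))) ^ 2 := by
  set a := Real.sqrt (2 + lam ^ 2) with ha
  have ha2 : a ^ 2 = 2 + lam ^ 2 := Real.sq_sqrt (by positivity)
  have hs2 : ((1 + 2 * lam ^ 2) * Real.sqrt ((1 + lam ^ 2) * (2 + lam ^ 2))) ^ 2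
      = (1 + 2 * lam ^ 2) ^ 2 * ((1 + lam ^ 2) * (2 + lam ^ 2)) := by
    rw [mul_pow, Real.sq_sqrt (by positivity)]
  -- h1 data
  have e1 : (h 1).eval a = 0 := by
    simp [h1]; linarith
  have e1d : (derivative (h 1)).eval a = 2 * a := by
    simp [h1, derivative_pow]
  have e1dd : (derivative (derivative (h 1))).eval a = 2 := by
    simp [h1, derivative_pow]
  -- h2 data
  have e2 : (h 2).eval a = -2 - 4 * lam ^ 2 := by
    simp [h2]; linear_combination (a ^ 2 - lam ^ 2 - 2) * ha2
  have e2d : (derivative (h 2)).eval a = 0 := by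
    simp [h2, derivative_pow]; linear_combination (4 * a) * ha2
  have e2dd : (derivative (derivative (h 2))).eval a = 16 + 8 * lam ^ 2 := by
    simp [h2, derivative_pow]; linear_combination 12 * ha2
  -- h3
  have h3 : h 3 = (h 1) ^ 2 * (h 2 - 2) + 2 := hrec 2 le_rfl
  have e3 : (h 3).eval a = 2 := by simp [h3, e1]
  have e3d : (derivative (h 3)).eval a = 0 := by
    simp [h3, derivative_pow, e1]
  have e3dd : (derivative (derivative (h 3))).eval a
      = -32 * ((1 + lam ^ 2) * (2 + lam ^ 2)) := by
    simp [h3, derivative_pow, e1, e1d, e2]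
    linear_combination (-8 * (-2 - 4 * lam ^ 2 - 2) - 64 * (1 + lam ^ 2)) * ha2
  -- h4
  have h4 : h 4 = (h 2) ^ 2 * (h 3 - 2) + 2 := hrec 3 (by norm_num)
  -- values and first derivatives for all k ≥ 3
  have Q : ∀ k, 3 ≤ k → (h k).eval a = 2 ∧ (derivative (h k)).eval a = 0 := by
    intro k hk
    induction k, hk using Nat.le_induction with
    | base => exact ⟨e3, e3d⟩
    | succ n hn ih =>
      have hr : h (n + 1) = (h (n - 1)) ^ 2 * (h n - 2) + 2 := hrec n (by omega)
      constructor
      · simp [hr, ih.1]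
      · simp [hr, derivative_pow, ih.1, ih.2]
  -- second derivatives for all k ≥ 4
  have R : ∀ k, 4 ≤ k → (derivative (derivative (h k))).eval a
      = -2 * 4 ^ (k - 1) *
        ((1 + 2 * lam ^ 2) * Real.sqrt ((1 + lam ^ 2) * (2 + lam ^ 2))) ^ 2 := by
    intro k hk
    induction k, hk using Nat.le_induction with
    | base =>
      rw [hs2]
      simp [h4, derivative_pow, e2, e2d, e3, e3d, e3dd]
      ring
    | succ n hn ih =>
      have hr : h (n + 1) = (h (n - 1)) ^ 2 * (h n - 2) + 2 := hrec n (by omega)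
      have q1 := Q (n - 1) (by omega)
      have q2 := Q n (by omega)
      rw [hs2] at ih ⊢
      simp [hr, derivative_pow, q1.1, q1.2, q2.1, q2.2, ih]
      have he : n - 1 + 1 = n := by omega
      conv_rhs => rw [← he]
      rw [pow_succ]
      ring
  intro k hk
  exact ⟨(Q k (by omega)).1, (Q k (by omega)).2, R k hk⟩
end
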